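/- arXiv:1101.2380 — 5 statements merged into one kernel-verified Lean document; each statement's English description precedes it below -/
import Mathlib

section
/- For n ≥ 2 and κ > 0, the quantity β(κ) := c(κ)^2 + n·c(κ)/κ − 1 is strictly positive, where c(κ) = [cos θ]_κ / [1]_κ with [γ]_κ = ∫_0^π γ(cos θ) e^{κ cos θ} sin^{n-2}θ dθ. -/
/-!
Write `J k = ∫₀^π cos^k θ e^{κ cos θ} sin^m θ dθ` with `m = n - 2`, so `c = J₁ / J₀`.
Integrating `d/dθ (e^{κ cos θ} sin^{m+1} θ)` and `d/dθ (cos θ e^{κ cos θ} sin^{m+1} θ)` over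
`[0, π]` gives two linear relations between the `J k`, which turn `β(κ) > 0` into
`J₁ J₂ < J₀ J₃`. As functions of `κ`, `J k' = J (k+1)`, so `J₀ J₃ - J₁ J₂` has derivative
`J₀ J₄ - J₂²`, positive by the strict Cauchy–Schwarz inequality; and it vanishes at `κ = 0`,
where the odd moments vanish by the symmetry `θ ↦ π - θ`.
-/

open Real intervalIntegral

noncomputable def cosMoment (m k : ℕ) (x : ℝ) : ℝ :=
  ∫ θ in (0:ℝ)..π, cos θ ^ k * exp (x * cos θ) * sin θ ^ m

lemma intervalIntegrable_cosMoment_integrand (m k : ℕ) (x a b : ℝ) :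
    IntervalIntegrable (fun θ => cos θ ^ k * exp (x * cos θ) * sin θ ^ m)
      MeasureTheory.volume a b :=
  (by fun_prop : Continuous _).intervalIntegrable _ _

lemma abs_cos_pow_mul_exp_mul_sin_pow_le (m k : ℕ) (x θ : ℝ) :
    |cos θ ^ k * exp (x * cos θ) * sin θ ^ m| ≤ exp |x| := by
  have hx : x * cos θ ≤ |x| := by
    rw [← mul_one |x|]
    exact (le_abs_self _).trans (abs_mul x _ ▸ by gcongr; exact abs_cos_le_one θ)
  rw [abs_mul, abs_mul, abs_pow, abs_pow, abs_exp]
  calc |cos θ| ^ k * exp (x * cos θ) * |sin θ| ^ m ≤ 1 * exp |x| * 1 := by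
        gcongr
        · exact pow_le_one₀ (abs_nonneg _) (abs_cos_le_one θ)
        · exact pow_le_one₀ (abs_nonneg _) (abs_sin_le_one θ)
    _ = exp |x| := by ring

lemma hasDerivAt_cosMoment (m k : ℕ) (x : ℝ) :
    HasDerivAt (cosMoment m k) (cosMoment m (k + 1) x) x := by
  refine (intervalIntegral.hasDerivAt_integral_of_dominated_loc_of_deriv_le
    (F := fun y θ => cos θ ^ k * exp (y * cos θ) * sin θ ^ m)
    (F' := fun y θ => cos θ ^ (k + 1) * exp (y * cos θ) * sin θ ^ m)
    (bound := fun _ => exp (|x| + 1)) (Metric.ball_mem_nhds x one_pos)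
    (.of_forall fun y => by fun_prop) (intervalIntegrable_cosMoment_integrand ..)
    (by fun_prop) ?_ intervalIntegrable_const ?_).2
  · refine .of_forall fun θ _ y hy => ?_
    have hy : |y| ≤ |x| + 1 := by
      have := abs_sub_abs_le_abs_sub y x
      rw [Metric.mem_ball, dist_eq] at hy
      linarith
    exact (abs_cos_pow_mul_exp_mul_sin_pow_le m (k + 1) y θ).trans (exp_le_exp.2 hy)
  · exact .of_forall fun θ _ y _ => (((hasDerivAt_mul_const (cos θ)).exp.const_mul
      (cos θ ^ k)).mul_const (sin θ ^ m)).congr_deriv (by ring)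

lemma cosMoment_zero_of_odd (m : ℕ) {k : ℕ} (hk : Odd k) : cosMoment m k 0 = 0 := by
  have h := intervalIntegral.integral_comp_sub_left (a := 0) (b := π)
    (fun θ => cos θ ^ k * exp (0 * cos θ) * sin θ ^ m) π
  simp only [cos_pi_sub, sin_pi_sub, hk.neg_pow, sub_self, sub_zero, neg_mul, zero_mul,
    integral_neg] at h
  rw [cosMoment]
  simp only [zero_mul] at h ⊢
  linarith

lemma integral_comp_cos_mul_exp_mul_sin_pow_pos (m : ℕ) (x : ℝ) {γ : ℝ → ℝ} (hγ : Continuous γ)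
    (hγ_nonneg : ∀ u, 0 ≤ γ u) {θ₀ : ℝ} (hθ₀ : θ₀ ∈ Set.Ioo 0 π) (hγθ₀ : 0 < γ (cos θ₀)) :
    0 < ∫ θ in (0:ℝ)..π, γ (cos θ) * exp (x * cos θ) * sin θ ^ m := by
  refine integral_pos pi_pos (by fun_prop) (fun θ hθ => ?_) ⟨θ₀, Set.Ioo_subset_Icc_self hθ₀, ?_⟩
  · have := sin_nonneg_of_nonneg_of_le_pi hθ.1.le hθ.2
    have := hγ_nonneg (cos θ)
    positivity
  · have := sin_pos_of_pos_of_lt_pi hθ₀.1 hθ₀.2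
    positivity

lemma cosMoment_zero_pos (m : ℕ) (x : ℝ) : 0 < cosMoment m 0 x := by
  simpa [cosMoment] using integral_comp_cos_mul_exp_mul_sin_pow_pos m x (γ := fun _ => 1)
    continuous_const (fun _ => zero_le_one) ⟨pi_div_two_pos, by linarith [pi_pos]⟩ one_pos

lemma cosMoment_add_two (m k : ℕ) (x : ℝ) :
    cosMoment (m + 2) k x = cosMoment m k x - cosMoment m (k + 2) x := by
  rw [cosMoment, cosMoment, cosMoment, ← integral_sub (intervalIntegrable_cosMoment_integrand ..)
    (intervalIntegrable_cosMoment_integrand ..)]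
  congr 1 with θ
  linear_combination cos θ ^ k * exp (x * cos θ) * sin θ ^ m * sin_sq_add_cos_sq θ

lemma integral_eq_zero_of_hasDerivAt_mul_sin_pow_succ (m : ℕ) {f g' : ℝ → ℝ}
    (hg : ∀ θ, HasDerivAt (fun θ => f θ * sin θ ^ (m + 1)) (g' θ) θ) (hg' : Continuous g') :
    ∫ θ in (0:ℝ)..π, g' θ = 0 := by
  rw [integral_eq_sub_of_hasDerivAt (fun θ _ => hg θ) (hg'.intervalIntegrable _ _)]
  simp

lemma succ_mul_cosMoment_one (m : ℕ) (x : ℝ) :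
    (m + 1) * cosMoment m 1 x = x * cosMoment (m + 2) 0 x := by
  have h := integral_eq_zero_of_hasDerivAt_mul_sin_pow_succ m
    (f := fun θ => exp (x * cos θ))
    (g' := fun θ => (m + 1) * (cos θ ^ 1 * exp (x * cos θ) * sin θ ^ m)
      - x * (cos θ ^ 0 * exp (x * cos θ) * sin θ ^ (m + 2)))
    (fun θ => (((hasDerivAt_cos θ).const_mul x).exp.fun_mul
      ((hasDerivAt_sin θ).fun_pow (m + 1))).congr_deriv (by push_cast; ring)) (by fun_prop)
  rwa [integral_sub ((intervalIntegrable_cosMoment_integrand ..).const_mul _)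
    ((intervalIntegrable_cosMoment_integrand ..).const_mul _), integral_const_mul,
    integral_const_mul, sub_eq_zero] at h

lemma succ_mul_cosMoment_two (m : ℕ) (x : ℝ) :
    (m + 1) * cosMoment m 2 x = cosMoment (m + 2) 0 x + x * cosMoment (m + 2) 1 x := by
  have h := integral_eq_zero_of_hasDerivAt_mul_sin_pow_succ m
    (f := fun θ => cos θ * exp (x * cos θ))
    (g' := fun θ => (m + 1) * (cos θ ^ 2 * exp (x * cos θ) * sin θ ^ m)
      - cos θ ^ 0 * exp (x * cos θ) * sin θ ^ (m + 2)
      - x * (cos θ ^ 1 * exp (x * cos θ) * sin θ ^ (m + 2)))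
    (fun θ => (((hasDerivAt_cos θ).fun_mul ((hasDerivAt_cos θ).const_mul x).exp).fun_mul
      ((hasDerivAt_sin θ).fun_pow (m + 1))).congr_deriv (by push_cast; ring)) (by fun_prop)
  rw [integral_sub (((intervalIntegrable_cosMoment_integrand ..).const_mul _).sub
    (intervalIntegrable_cosMoment_integrand ..))
    ((intervalIntegrable_cosMoment_integrand ..).const_mul _),
    integral_sub ((intervalIntegrable_cosMoment_integrand ..).const_mul _)
    (intervalIntegrable_cosMoment_integrand ..), integral_const_mul, integral_const_mul] at h
  change _ * cosMoment m 2 x - cosMoment (m + 2) 0 x - x * cosMoment (m + 2) 1 x = 0 at h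
  linarith

lemma sq_cosMoment_two_lt (m : ℕ) (x : ℝ) :
    cosMoment m 2 x ^ 2 < cosMoment m 0 x * cosMoment m 4 x := by
  have hquad : ∀ t,
      0 < cosMoment m 0 x * (t * t) + (-2 * cosMoment m 2 x) * t + cosMoment m 4 x := by
    intro t
    obtain ⟨θ₀, hθ₀, hne⟩ : ∃ θ₀ ∈ Set.Ioo 0 π, cos θ₀ ^ 2 ≠ t := by
      by_cases ht : t = 0
      · refine ⟨π / 3, ⟨by positivity, by linarith [pi_pos]⟩, ?_⟩
        rw [cos_pi_div_three, ht]
        norm_num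
      · exact ⟨π / 2, ⟨by positivity, by linarith [pi_pos]⟩, by simpa using Ne.symm ht⟩
    have hpos := integral_comp_cos_mul_exp_mul_sin_pow_pos m x (γ := fun u => (u ^ 2 - t) ^ 2)
      (by fun_prop) (fun _ => sq_nonneg _) hθ₀ (sq_pos_of_ne_zero (sub_ne_zero.2 hne))
    have hexpand : (fun θ => (cos θ ^ 2 - t) ^ 2 * exp (x * cos θ) * sin θ ^ m) = fun θ =>
        t ^ 2 * (cos θ ^ 0 * exp (x * cos θ) * sin θ ^ m)
          - 2 * t * (cos θ ^ 2 * exp (x * cos θ) * sin θ ^ m)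
          + cos θ ^ 4 * exp (x * cos θ) * sin θ ^ m := by
      ext θ
      ring
    rw [hexpand, integral_add (((intervalIntegrable_cosMoment_integrand ..).const_mul _).sub
      ((intervalIntegrable_cosMoment_integrand ..).const_mul _))
      (intervalIntegrable_cosMoment_integrand ..),
      integral_sub ((intervalIntegrable_cosMoment_integrand ..).const_mul _)
      ((intervalIntegrable_cosMoment_integrand ..).const_mul _), integral_const_mul,
      integral_const_mul] at hpos
    change 0 < t ^ 2 * cosMoment m 0 x - 2 * t * cosMoment m 2 x + cosMoment m 4 x at hpos
    linarith
  have := discrim_lt_zero (cosMoment_zero_pos m x).ne' hquad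
  rw [discrim] at this
  linarith

lemma cosMoment_one_mul_two_lt (m : ℕ) {x : ℝ} (hx : 0 < x) :
    cosMoment m 1 x * cosMoment m 2 x < cosMoment m 0 x * cosMoment m 3 x := by
  set G := fun y => cosMoment m 0 y * cosMoment m 3 y - cosMoment m 1 y * cosMoment m 2 y
  have hG : StrictMono G := by
    refine strictMono_of_hasDerivAt_pos (fun y => (((hasDerivAt_cosMoment m 0 y).mul
      (hasDerivAt_cosMoment m 3 y)).sub ((hasDerivAt_cosMoment m 1 y).mul
      (hasDerivAt_cosMoment m 2 y)))) fun y => ?_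
    linarith [sq_cosMoment_two_lt m y]
  have hG0 : G 0 = 0 := by
    simp [G, cosMoment_zero_of_odd m odd_one, cosMoment_zero_of_odd m (by decide : Odd 3)]
  linarith [hG hx]

lemma cosMoment_ratio_sq_add_div_sub_one_pos (m : ℕ) {x : ℝ} (hx : 0 < x) :
    0 < (cosMoment m 1 x / cosMoment m 0 x) ^ 2
      + (m + 2) * (cosMoment m 1 x / cosMoment m 0 x) / x - 1 := by
  have hA := cosMoment_zero_pos m x
  have hcross := cosMoment_one_mul_two_lt m hx
  have hibp1 := succ_mul_cosMoment_one m x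
  have hibp2 := succ_mul_cosMoment_two m x
  simp only [cosMoment_add_two] at hibp1 hibp2
  set A := cosMoment m 0 x
  set B := cosMoment m 1 x
  set C := cosMoment m 2 x
  set D := cosMoment m 3 x
  have hid : x ^ 2 * (A * D - B * C) = (m + 1) * (x * B ^ 2 + (m + 2) * A * B - x * A ^ 2) := by
    linear_combination (x * A) * hibp2 - (x * B + (m + 2) * A) * hibp1
  have hnum : 0 < x * B ^ 2 + (m + 2) * A * B - x * A ^ 2 := by
    have : 0 < (m + 1) * (x * B ^ 2 + (m + 2) * A * B - x * A ^ 2) := by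
      rw [← hid]
      exact mul_pos (by positivity) (sub_pos.2 hcross)
    exact pos_of_mul_pos_right this (by positivity)
  rw [show (B / A) ^ 2 + (m + 2) * (B / A) / x - 1
      = (x * B ^ 2 + (m + 2) * A * B - x * A ^ 2) / (x * A ^ 2) by field_simp]
  positivity

/-- For `n ≥ 2` and `κ > 0`, the quantity `β(κ) = c(κ)² + n·c(κ)/κ − 1` is strictly
positive, where `c(κ) = [cos θ]_κ / [1]_κ` with
`[γ]_κ = ∫_0^π γ(cos θ) e^{κ cos θ} sin^{n-2}θ dθ`. -/
theorem stmt1 (n : ℕ) (hn : 2 ≤ n) (κ : ℝ) (hκ : 0 < κ)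
    (bracket : (ℝ → ℝ) → ℝ)
    (hbracket : ∀ γ : ℝ → ℝ, bracket γ =
      ∫ θ in (0:ℝ)..π, γ (Real.cos θ) * Real.exp (κ * Real.cos θ) * (Real.sin θ) ^ (n - 2))
    (c : ℝ) (hc : c = bracket (fun x => x) / bracket (fun _ => 1)) :
    0 < c ^ 2 + (n : ℝ) * c / κ - 1 := by
  obtain ⟨m, rfl⟩ := Nat.exists_eq_add_of_le' hn
  have hc' : c = cosMoment m 1 κ / cosMoment m 0 κ := by
    simp [hc, hbracket, cosMoment]
  rw [hc']
  push_cast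
  linarith [cosMoment_ratio_sq_add_div_sub_one_pos m hκ]
end

section
/- For n ≥ 2, with a_p = (1/(2p)!) ∫_0^π cos^{2p}θ sin^{n-2}θ dθ, the power series identity κ [cos θ]_κ^2 + n [cos θ]_κ [1]_κ − κ [1]_κ^2 = Σ_{k≥0} ( Σ_{p+q=k} 2(p−q)^2 / ((2p+n)(2q+n)) · a_p a_q ) κ^{2k+1} holds, where [1]_κ = Σ_p a_p κ^{2p} and [cos θ]_κ = Σ_p (2p+2) a_{p+1} κ^{2p+1}. -/
open Real intervalIntegral Finset

/-!
Write `c_p = (2p+2) a_{p+1}`. Integration by parts gives the recurrence `a_p = (2p+n) c_p`, which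
forces `|a_p| ≤ |a_0| / p!`, so every series in sight converges absolutely. With `t = κ²`,
`A = Σ a_p t^p` and `C = Σ c_p t^p`, the left side is `κ (t C² + n C A - A²)`, and
`t C = Σ 2p a_p t^p`. Multiplying out by Cauchy products, the recurrence turns the `k`-th
coefficient into `Σ_{p+q=k} 4p(p-q) c_p c_q`; symmetrising in `p ↔ q` gives
`Σ_{p+q=k} 2(p-q)² c_p c_q`, which is the stated coefficient after `c_p = a_p / (2p+n)`.
-/

/- Integration by parts against `(cos^(j+1) sin^(m+1))'`, whose boundary terms vanish since
`sin 0 = sin π = 0`, followed by `sin² = 1 - cos²`. -/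
theorem integral_cos_pow_add_two_mul_sin_pow (j m : ℕ) :
    ((j + m + 2 : ℕ) : ℝ) * ∫ θ in (0)..π, cos θ ^ (j + 2) * sin θ ^ m
      = ((j + 1 : ℕ) : ℝ) * ∫ θ in (0)..π, cos θ ^ j * sin θ ^ m := by
  have hint : ∀ i k : ℕ,
      IntervalIntegrable (fun θ => cos θ ^ i * sin θ ^ k) MeasureTheory.volume 0 π :=
    fun i k => ((continuous_cos.pow i).mul (continuous_sin.pow k)).intervalIntegrable _ _
  have hderiv : ∀ θ : ℝ, HasDerivAt (fun θ => cos θ ^ (j + 1) * sin θ ^ (m + 1))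
      ((m + 1 : ℕ) * (cos θ ^ (j + 2) * sin θ ^ m)
        - (j + 1 : ℕ) * (cos θ ^ j * sin θ ^ (m + 2))) θ := fun θ =>
    (((hasDerivAt_cos θ).fun_pow _).fun_mul ((hasDerivAt_sin θ).fun_pow _)).congr_deriv
      (by push_cast; ring)
  have hparts := integral_eq_sub_of_hasDerivAt (fun θ _ => hderiv θ)
    (((hint _ _).const_mul _).sub ((hint _ _).const_mul _))
  have hsin_sq : ∫ θ in (0)..π, cos θ ^ j * sin θ ^ (m + 2)
      = (∫ θ in (0)..π, cos θ ^ j * sin θ ^ m)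
        - ∫ θ in (0)..π, cos θ ^ (j + 2) * sin θ ^ m := by
    rw [← integral_sub (hint _ _) (hint _ _)]
    refine integral_congr fun θ _ => ?_
    rw [pow_add (sin θ), sin_sq]
    ring
  rw [integral_sub ((hint _ _).const_mul _) ((hint _ _).const_mul _), integral_const_mul,
    integral_const_mul, hsin_sq] at hparts
  simp only [sin_pi, sin_zero, zero_pow m.succ_ne_zero, mul_zero, sub_zero] at hparts
  push_cast at hparts ⊢
  linarith

theorem recurrence_of_eq_integral_cos_pow_mul_sin_pow (m : ℕ) (a : ℕ → ℝ)
    (ha : ∀ p : ℕ, a p = 1 / ((2 * p).factorial : ℝ) *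
      ∫ θ in (0)..π, cos θ ^ (2 * p) * sin θ ^ m) (p : ℕ) :
    a p = (2 * p + (m + 2)) * ((2 * p + 2) * a (p + 1)) := by
  have hrec := integral_cos_pow_add_two_mul_sin_pow (2 * p) m
  have hfact : ((2 * (p + 1)).factorial : ℝ) = (2 * p + 2) * (2 * p + 1) * (2 * p).factorial := by
    rw [show 2 * (p + 1) = 2 * p + 1 + 1 by ring, Nat.factorial_succ, Nat.factorial_succ]
    push_cast
    ring
  rw [ha, ha, hfact, show 2 * (p + 1) = 2 * p + 2 by ring]
  push_cast at hrec
  field_simp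
  linear_combination -hrec

theorem hasSum_sum_antidiagonal_mul_pow {R : Type*} [NormedCommRing R] [CompleteSpace R]
    {x y : ℕ → R} {t : R} (hx : Summable fun p => ‖x p * t ^ p‖)
    (hy : Summable fun q => ‖y q * t ^ q‖) :
    HasSum (fun k => (∑ ij ∈ antidiagonal k, x ij.1 * y ij.2) * t ^ k)
      ((∑' p, x p * t ^ p) * ∑' q, y q * t ^ q) := by
  have hpow : ∀ k, ∑ ij ∈ antidiagonal k, x ij.1 * t ^ ij.1 * (y ij.2 * t ^ ij.2)
      = (∑ ij ∈ antidiagonal k, x ij.1 * y ij.2) * t ^ k := fun k => by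
    rw [sum_mul]
    refine sum_congr rfl fun ij hij => ?_
    rw [← mem_antidiagonal.mp hij, pow_add]
    ring
  simp only [← hpow]
  rw [tsum_mul_tsum_eq_tsum_sum_antidiagonal_of_summable_norm hx hy]
  exact (summable_norm_sum_mul_antidiagonal_of_summable_norm hx hy).of_norm.hasSum

theorem summable_norm_mul_pow_of_abs_le_div_factorial {x : ℕ → ℝ} {M : ℝ}
    (hx : ∀ p, |x p| ≤ M / p.factorial) (t : ℝ) : Summable fun p => ‖x p * t ^ p‖ := by
  refine (((Real.summable_pow_div_factorial |t|).mul_left M)).of_nonneg_of_le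
    (fun p => norm_nonneg _) fun p => ?_
  rw [norm_mul, norm_pow, Real.norm_eq_abs, Real.norm_eq_abs, ← mul_div_assoc, mul_div_right_comm]
  gcongr
  exact hx p

section Recurrence

variable {n : ℝ} {a c : ℕ → ℝ}

theorem abs_le_div_factorial_of_recurrence (hn : 1 ≤ n) (ha : ∀ p, a p = (2 * p + n) * c p)
    (hc : ∀ p, c p = (2 * p + 2) * a (p + 1)) (p : ℕ) : |a p| ≤ |a 0| / p.factorial := by
  induction p with
  | zero => simp
  | succ p ih =>
    have hstep : (p + 1) * |a (p + 1)| ≤ |a p| := by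
      rw [ha p, hc p, abs_mul, abs_mul, ← mul_assoc,
        abs_of_nonneg (by positivity : (0:ℝ) ≤ 2 * p + n),
        abs_of_nonneg (by positivity : (0:ℝ) ≤ 2 * p + 2)]
      gcongr
      nlinarith
    calc |a (p + 1)| ≤ |a p| / (p + 1) := by rw [le_div_iff₀ (by positivity)]; linarith
      _ ≤ |a 0| / p.factorial / (p + 1) := by gcongr
      _ = |a 0| / (p + 1).factorial := by rw [Nat.factorial_succ, div_div]; push_cast; ring

theorem abs_le_abs_of_eq_mul (hn : 1 ≤ n) (ha : ∀ p, a p = (2 * p + n) * c p) (p : ℕ) :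
    |c p| ≤ |a p| := by
  rw [ha, abs_mul, abs_of_nonneg (by positivity : (0:ℝ) ≤ 2 * p + n)]
  exact le_mul_of_one_le_left (abs_nonneg _) (by linarith [(p.cast_nonneg : (0:ℝ) ≤ p)])

theorem hasSum_two_mul_mul_pow (hc : ∀ p, c p = (2 * p + 2) * a (p + 1)) {t C : ℝ}
    (h : HasSum (fun p => c p * t ^ p) C) : HasSum (fun p => 2 * p * a p * t ^ p) (t * C) := by
  have hshift : ∀ p : ℕ,
      2 * ((p + 1 : ℕ) : ℝ) * a (p + 1) * t ^ (p + 1) = t * (c p * t ^ p) :=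
    fun p => by rw [hc]; push_cast; ring
  refine (hasSum_nat_add_iff' 1).mp ?_
  simpa only [hshift, sum_range_one, Nat.cast_zero, mul_zero, zero_mul, sub_zero]
    using h.mul_left t

theorem summable_norm_two_mul_mul_pow (hc : ∀ p, c p = (2 * p + 2) * a (p + 1)) {t : ℝ}
    (h : Summable fun p => ‖c p * t ^ p‖) : Summable fun p => ‖2 * p * a p * t ^ p‖ := by
  have hshift : ∀ p : ℕ,
      ‖2 * ((p + 1 : ℕ) : ℝ) * a (p + 1) * t ^ (p + 1)‖ = ‖t‖ * ‖c p * t ^ p‖ :=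
    fun p => by rw [hc, ← norm_mul]; push_cast; ring_nf
  refine (summable_nat_add_iff 1).mp ?_
  simpa only [hshift] using h.mul_left ‖t‖

theorem sum_antidiagonal_combination_eq (ha : ∀ p, a p = (2 * p + n) * c p) (k : ℕ) :
    (∑ ij ∈ antidiagonal k, 2 * ij.1 * a ij.1 * c ij.2)
      + n * (∑ ij ∈ antidiagonal k, c ij.1 * a ij.2)
      - ∑ ij ∈ antidiagonal k, a ij.1 * a ij.2
      = ∑ ij ∈ antidiagonal k, 2 * ((ij.1 : ℝ) - ij.2) ^ 2 * (c ij.1 * c ij.2) := by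
  set f : ℕ × ℕ → ℝ := fun ij => 4 * (ij.1 : ℝ) * (ij.1 - ij.2) * (c ij.1 * c ij.2)
  have hswap : ∑ ij ∈ antidiagonal k, f ij.swap = ∑ ij ∈ antidiagonal k, f ij :=
    Nat.sum_antidiagonal_swap
  calc _ = ∑ ij ∈ antidiagonal k, f ij := by
        rw [mul_sum, ← sum_add_distrib, ← sum_sub_distrib]
        refine sum_congr rfl fun ij _ => ?_
        rw [ha ij.1, ha ij.2]
        ring
    _ = (∑ ij ∈ antidiagonal k, f ij + ∑ ij ∈ antidiagonal k, f ij.swap) / 2 := by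
        rw [hswap]
        ring
    _ = _ := by
        rw [← sum_add_distrib, sum_div]
        refine sum_congr rfl fun ij _ => ?_
        simp only [f, Prod.fst_swap, Prod.snd_swap]
        ring

theorem hasSum_mul_sq_add_mul_sub_sq (hn : 1 ≤ n) (ha : ∀ p, a p = (2 * p + n) * c p)
    (hc : ∀ p, c p = (2 * p + 2) * a (p + 1)) (t : ℝ) :
    HasSum (fun k : ℕ =>
        (∑ ij ∈ antidiagonal k, 2 * ((ij.1 : ℝ) - ij.2) ^ 2 * (c ij.1 * c ij.2)) * t ^ k)
      (t * (∑' p, c p * t ^ p) ^ 2 + n * (∑' p, c p * t ^ p) * (∑' p, a p * t ^ p)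
        - (∑' p, a p * t ^ p) ^ 2) := by
  have ha_le := abs_le_div_factorial_of_recurrence hn ha hc
  have hA := summable_norm_mul_pow_of_abs_le_div_factorial ha_le t
  have hC := summable_norm_mul_pow_of_abs_le_div_factorial
    (fun p => (abs_le_abs_of_eq_mul hn ha p).trans (ha_le p)) t
  have hCC := hasSum_sum_antidiagonal_mul_pow (summable_norm_two_mul_mul_pow hc hC) hC
  rw [(hasSum_two_mul_mul_pow hc hC.of_norm.hasSum).tsum_eq] at hCC
  have hCA := hasSum_sum_antidiagonal_mul_pow hC hA
  have hAA := hasSum_sum_antidiagonal_mul_pow hA hA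
  set A := ∑' p, a p * t ^ p
  set C := ∑' p, c p * t ^ p
  rw [show t * C ^ 2 + n * C * A - A ^ 2 = t * C * C + n * (C * A) - A * A by ring]
  refine ((hCC.add (hCA.mul_left n)).sub hAA).congr_fun fun k => ?_
  rw [← sum_antidiagonal_combination_eq ha k]
  ring

end Recurrence

theorem mul_sq_add_mul_sub_mul_sq_eq_tsum (n : ℕ) (hn : 1 ≤ n) (a c : ℕ → ℝ)
    (ha : ∀ p, a p = (2 * p + n) * c p) (hc : ∀ p, c p = (2 * p + 2) * a (p + 1)) (κ : ℝ) :
    κ * (∑' p : ℕ, c p * κ ^ (2 * p + 1)) ^ 2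
      + n * (∑' p : ℕ, c p * κ ^ (2 * p + 1)) * (∑' p : ℕ, a p * κ ^ (2 * p))
      - κ * (∑' p : ℕ, a p * κ ^ (2 * p)) ^ 2 =
      ∑' k : ℕ, (∑ p ∈ range (k + 1),
        2 * ((p : ℝ) - ((k - p : ℕ) : ℝ)) ^ 2 /
          (((2 * p + n : ℕ) : ℝ) * ((2 * (k - p) + n : ℕ) : ℝ)) * a p * a (k - p))
        * κ ^ (2 * k + 1) := by
  have hodd : ∀ x : ℕ → ℝ,
      ∑' p, x p * κ ^ (2 * p + 1) = κ * ∑' p, x p * (κ ^ 2) ^ p := fun x => by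
    rw [← tsum_mul_left]
    exact tsum_congr fun p => by ring
  have heven : ∀ x : ℕ → ℝ, ∑' p, x p * κ ^ (2 * p) = ∑' p, x p * (κ ^ 2) ^ p :=
    fun x => by simp only [pow_mul]
  have hcoeff : ∀ k, ∑ p ∈ range (k + 1),
        2 * ((p : ℝ) - ((k - p : ℕ) : ℝ)) ^ 2 /
          (((2 * p + n : ℕ) : ℝ) * ((2 * (k - p) + n : ℕ) : ℝ)) * a p * a (k - p)
      = ∑ ij ∈ antidiagonal k, 2 * ((ij.1 : ℝ) - ij.2) ^ 2 * (c ij.1 * c ij.2) := fun k => by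
    rw [Nat.sum_antidiagonal_eq_sum_range_succ_mk]
    refine sum_congr rfl fun p _ => ?_
    have hden : ∀ j : ℕ, ((2 * j + n : ℕ) : ℝ) ≠ 0 := fun j => by positivity
    rw [ha p, ha (k - p)]
    field_simp [hden]
    push_cast
    ring
  simp only [hcoeff]
  rw [hodd, hodd, heven,
    (hasSum_mul_sq_add_mul_sub_sq (by exact_mod_cast hn) ha hc (κ ^ 2)).tsum_eq]
  ring

/-- For `n ≥ 2`, with `a_p = (1/(2p)!) ∫_0^π cos^{2p}θ sin^{n-2}θ dθ`, the power series
identity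
`κ [cosθ]_κ² + n [cosθ]_κ [1]_κ − κ [1]_κ²
  = Σ_{k≥0} ( Σ_{p+q=k} 2(p−q)²/((2p+n)(2q+n)) a_p a_q ) κ^{2k+1}`
holds, where `[1]_κ = Σ_p a_p κ^{2p}` and `[cosθ]_κ = Σ_p (2p+2) a_{p+1} κ^{2p+1}`. -/
theorem stmt2 (n : ℕ) (hn : 2 ≤ n) (a : ℕ → ℝ)
    (ha : ∀ p : ℕ, a p = (1 / (Nat.factorial (2 * p) : ℝ)) *
      ∫ θ in (0:ℝ)..π, (Real.cos θ) ^ (2 * p) * (Real.sin θ) ^ (n - 2))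
    (κ : ℝ) (One Cos : ℝ)
    (hOne : One = ∑' p : ℕ, a p * κ ^ (2 * p))
    (hCos : Cos = ∑' p : ℕ, ((2 * p + 2 : ℕ) : ℝ) * a (p + 1) * κ ^ (2 * p + 1)) :
    κ * Cos ^ 2 + (n : ℝ) * Cos * One - κ * One ^ 2 =
      ∑' k : ℕ, (∑ p ∈ Finset.range (k + 1),
        2 * ((p : ℝ) - ((k - p : ℕ) : ℝ)) ^ 2 /
          (((2 * p + n : ℕ) : ℝ) * ((2 * (k - p) + n : ℕ) : ℝ)) * a p * a (k - p))
        * κ ^ (2 * k + 1) := by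
  obtain ⟨m, rfl⟩ := Nat.exists_eq_add_of_le' hn
  set c : ℕ → ℝ := fun p => ((2 * p + 2 : ℕ) : ℝ) * a (p + 1)
  have hc : ∀ p, c p = (2 * p + 2) * a (p + 1) := fun p => by simp [c]
  have hrec : ∀ p, a p = (2 * p + (m + 2 : ℕ)) * c p := fun p => by
    rw [recurrence_of_eq_integral_cos_pow_mul_sin_pow m a (by simpa using ha) p, hc]
    push_cast
    ring
  rw [hOne, hCos]
  exact mul_sq_add_mul_sub_mul_sq_eq_tsum (m + 2) (by omega) a c hrec hc κ
end

section
/- The function σ̃(κ) = c(κ)/κ, where c(κ) = (∫_0^π cosθ e^{κcosθ} sin^{n-2}θ dθ)/(∫_0^π e^{κcosθ} sin^{n-2}θ dθ), extends continuously to κ = 0 with value 1/n, is strictly decreasing on (0,∞), and tends to 0 as κ → ∞. Consequently, for σ ≥ 1/n the equation c(κ) = σκ has the unique nonnegative solution κ = 0, while for 0 < σ < 1/n it has exactly one additional positive solution. -/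
/-!
Write `Z_j(κ) = ∫_0^π e^{κ cos θ} sin^j θ dθ` (`partitionFn`). Integrating the derivative of
`e^{κ cos θ} sin^{j+1} θ` over `[0, π]` gives
`∫_0^π cos θ e^{κ cos θ} sin^j θ dθ = κ Z_{j+2}(κ)/(j+1)`, so for `κ ≠ 0`,
`σ̃(κ) = Z_n(κ) / ((n-1) Z_{n-2}(κ))` (`meanCosSlope`). This is continuous, equals `1/n` at `0`
by Wallis' recursion, and is at most `1/κ` because `c(κ) ≤ 1`.

For monotonicity, `θ ↦ π - θ` shows `Z_j(κ) = ∫_0^π cosh(κ cos θ) sin^j θ dθ`. For `0 ≤ κ₁ < κ₂`,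
twice `Z_{j+2}(κ₁) Z_j(κ₂) - Z_{j+2}(κ₂) Z_j(κ₁)` is the integral over `[0, π]²` of
`sin^j θ sin^j φ (v² - u²)(cosh κ₁u cosh κ₂v - cosh κ₂u cosh κ₁v)` with `u = cos θ`, `v = cos φ`
(`crossKernel`). By the product-to-sum formula, the last factor has the sign of `v² - u²`, since
`(κ₁u ± κ₂v)² - (κ₂u ± κ₁v)² = (κ₂² - κ₁²)(v² - u²)`. The claims about `c(κ) = σκ` then follow from
the intermediate value theorem.
-/

open Real intervalIntegral Filter Set Topology

lemma intervalIntegral_pos_of_nonneg_of_pos_on {f : ℝ → ℝ} {a b c d : ℝ} (hf : Continuous f)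
    (hac : a ≤ c) (hcd : c < d) (hdb : d ≤ b) (hnonneg : ∀ x ∈ Icc a b, 0 ≤ f x)
    (hpos : ∀ x ∈ Ioo c d, 0 < f x) : 0 < ∫ x in a..b, f x := by
  refine (intervalIntegral_pos_of_pos_on (hf.intervalIntegrable c d) hpos hcd).trans_le ?_
  refine integral_mono_interval hac hcd.le hdb ?_ (hf.intervalIntegrable a b)
  filter_upwards [MeasureTheory.ae_restrict_mem measurableSet_Ioc] with x hx
  exact hnonneg x (Ioc_subset_Icc_self hx)

lemma cosh_mul_cosh_lt_cosh_mul_cosh {κ₁ κ₂ u v : ℝ} (hκ₁ : 0 ≤ κ₁) (hκ : κ₁ < κ₂)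
    (huv : u ^ 2 < v ^ 2) : cosh (κ₂ * u) * cosh (κ₁ * v) < cosh (κ₁ * u) * cosh (κ₂ * v) := by
  have hprod : ∀ x y : ℝ, cosh x * cosh y = (cosh (x + y) + cosh (x - y)) / 2 := fun x y => by
    rw [cosh_add, cosh_sub]; ring
  have hsq : 0 < (κ₂ ^ 2 - κ₁ ^ 2) * (v ^ 2 - u ^ 2) :=
    mul_pos (by nlinarith) (by linarith)
  have hplus : cosh (κ₂ * u + κ₁ * v) < cosh (κ₁ * u + κ₂ * v) := by
    rw [cosh_lt_cosh, ← sq_lt_sq]; nlinarith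
  have hminus : cosh (κ₂ * u - κ₁ * v) < cosh (κ₁ * u - κ₂ * v) := by
    rw [cosh_lt_cosh, ← sq_lt_sq]; nlinarith
  rw [hprod, hprod]
  linarith

lemma cosh_mul_cosh_sub_mul_nonneg {κ₁ κ₂ : ℝ} (hκ₁ : 0 ≤ κ₁) (hκ : κ₁ < κ₂) (u v : ℝ) :
    0 ≤ (v ^ 2 - u ^ 2) * (cosh (κ₁ * u) * cosh (κ₂ * v) - cosh (κ₂ * u) * cosh (κ₁ * v)) := by
  rcases lt_trichotomy (u ^ 2) (v ^ 2) with huv | huv | huv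
  · have := cosh_mul_cosh_lt_cosh_mul_cosh hκ₁ hκ huv
    exact mul_nonneg (by linarith) (by linarith)
  · simp [huv]
  · have := cosh_mul_cosh_lt_cosh_mul_cosh hκ₁ hκ huv
    exact mul_nonneg_of_nonpos_of_nonpos (by linarith) (by linarith)

lemma integral_sub_sub_add {f g h k : ℝ → ℝ} (hf : Continuous f) (hg : Continuous g)
    (hh : Continuous h) (hk : Continuous k) (a b : ℝ) :
    ∫ x in a..b, (f x - g x - h x + k x)
      = (∫ x in a..b, f x) - (∫ x in a..b, g x) - (∫ x in a..b, h x) + ∫ x in a..b, k x := by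
  have hint : ∀ u : ℝ → ℝ, Continuous u → IntervalIntegrable u MeasureTheory.volume a b :=
    fun u hu => hu.intervalIntegrable a b
  rw [integral_add (hint _ (by fun_prop)) (hint _ hk), integral_sub (hint _ (by fun_prop))
    (hint _ hh), integral_sub (hint _ hf) (hint _ hg)]

lemma existsUnique_pos_eq_of_strictAntiOn {g : ℝ → ℝ} (hg : ContinuousOn g (Ici 0))
    (hanti : StrictAntiOn g (Ici 0)) (htop : Tendsto g atTop (𝓝 0)) {σ : ℝ} (hσ : 0 < σ)
    (hσg : σ < g 0) : ∃! κ, 0 < κ ∧ g κ = σ := by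
  obtain ⟨K, hK, hK0⟩ := ((htop.eventually_lt_const hσ).and (eventually_ge_atTop 0)).exists
  obtain ⟨κ, hκ, hgκ⟩ :=
    intermediate_value_Icc' hK0 (hg.mono Icc_subset_Ici_self) ⟨hK.le, hσg.le⟩
  have hκ0 : κ ≠ 0 := by rintro rfl; exact hσg.ne' hgκ
  refine ⟨κ, ⟨lt_of_le_of_ne hκ.1 hκ0.symm, hgκ⟩, fun κ' ⟨hκ', hgκ'⟩ => ?_⟩
  exact hanti.injOn (le_of_lt hκ') hκ.1 (hgκ'.trans hgκ.symm)

namespace VonMisesFisher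

noncomputable def partitionFn (j : ℕ) (κ : ℝ) : ℝ :=
  ∫ θ in (0:ℝ)..π, exp (κ * cos θ) * sin θ ^ j

noncomputable def meanCos (j : ℕ) (κ : ℝ) : ℝ :=
  (∫ θ in (0:ℝ)..π, cos θ * exp (κ * cos θ) * sin θ ^ j) / partitionFn j κ

noncomputable def meanCosSlope (j : ℕ) (κ : ℝ) : ℝ :=
  partitionFn (j + 2) κ / ((j + 1) * partitionFn j κ)

lemma partitionFn_pos (j : ℕ) (κ : ℝ) : 0 < partitionFn j κ :=
  intervalIntegral_pos_of_pos_on (by apply Continuous.intervalIntegrable; fun_prop)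
    (fun θ hθ => mul_pos (exp_pos _) (pow_pos (sin_pos_of_pos_of_lt_pi hθ.1 hθ.2) j)) pi_pos

lemma continuous_partitionFn (j : ℕ) : Continuous (partitionFn j) :=
  continuous_parametric_intervalIntegral_of_continuous' (by fun_prop) 0 π

lemma partitionFn_neg (j : ℕ) (κ : ℝ) : partitionFn j (-κ) = partitionFn j κ := by
  have h := integral_comp_sub_left (fun θ => exp (κ * cos θ) * sin θ ^ j) π (a := 0) (b := π)
  simp only [cos_pi_sub, sin_pi_sub, sub_self, sub_zero, mul_neg] at h
  simpa [partitionFn] using h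

noncomputable def coshWeight (j : ℕ) (κ θ : ℝ) : ℝ := cosh (κ * cos θ) * sin θ ^ j

@[fun_prop]
lemma continuous_coshWeight (j : ℕ) (κ : ℝ) : Continuous (coshWeight j κ) := by
  unfold coshWeight; fun_prop

lemma partitionFn_eq_integral_coshWeight (j : ℕ) (κ : ℝ) :
    partitionFn j κ = ∫ θ in (0:ℝ)..π, coshWeight j κ θ := by
  have hsum : partitionFn j κ + partitionFn j (-κ)
      = ∫ θ in (0:ℝ)..π, 2 * coshWeight j κ θ := by
    rw [partitionFn, partitionFn, ← integral_add (by apply Continuous.intervalIntegrable; fun_prop)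
      (by apply Continuous.intervalIntegrable; fun_prop)]
    congr 1 with θ
    rw [coshWeight, cosh_eq, neg_mul]
    ring
  rw [integral_const_mul, partitionFn_neg] at hsum
  linarith

lemma integral_cos_mul_exp_mul_sin_pow (j : ℕ) (κ : ℝ) :
    ∫ θ in (0:ℝ)..π, cos θ * exp (κ * cos θ) * sin θ ^ j
      = κ / (j + 1) * partitionFn (j + 2) κ := by
  have hderiv : ∀ θ ∈ uIcc (0:ℝ) π, HasDerivAt (fun θ => exp (κ * cos θ) * sin θ ^ (j + 1))
      ((j + 1) * (cos θ * exp (κ * cos θ) * sin θ ^ j) - κ * (exp (κ * cos θ) * sin θ ^ (j + 2)))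
      θ := fun θ _ => by
    have := (((hasDerivAt_cos θ).const_mul κ).exp).fun_mul ((hasDerivAt_sin θ).fun_pow (j + 1))
    refine this.congr_deriv ?_
    push_cast [Nat.add_sub_cancel]
    ring
  have hftc := integral_eq_sub_of_hasDerivAt hderiv
    (by apply Continuous.intervalIntegrable; fun_prop)
  rw [integral_sub (by apply Continuous.intervalIntegrable; fun_prop)
    (by apply Continuous.intervalIntegrable; fun_prop), integral_const_mul, integral_const_mul]
    at hftc
  simp only [sin_pi, sin_zero, zero_pow j.succ_ne_zero, mul_zero, sub_self] at hftc
  rw [partitionFn, div_mul_eq_mul_div, eq_div_iff (by positivity)]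
  linarith

lemma partitionFn_add_two_zero (j : ℕ) :
    partitionFn (j + 2) 0 = (j + 1) / (j + 2) * partitionFn j 0 := by
  simp [partitionFn, integral_sin_pow]

noncomputable def crossKernel (j : ℕ) (κ₁ κ₂ θ φ : ℝ) : ℝ :=
  coshWeight (j + 2) κ₁ θ * coshWeight j κ₂ φ - coshWeight (j + 2) κ₂ θ * coshWeight j κ₁ φ
    - coshWeight j κ₁ θ * coshWeight (j + 2) κ₂ φ + coshWeight j κ₂ θ * coshWeight (j + 2) κ₁ φ

lemma crossKernel_eq (j : ℕ) (κ₁ κ₂ θ φ : ℝ) :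
    crossKernel j κ₁ κ₂ θ φ = sin θ ^ j * sin φ ^ j * ((cos φ ^ 2 - cos θ ^ 2) *
      (cosh (κ₁ * cos θ) * cosh (κ₂ * cos φ) - cosh (κ₂ * cos θ) * cosh (κ₁ * cos φ))) := by
  simp only [crossKernel, coshWeight, pow_add, sin_sq]
  ring

section crossKernel

variable {j : ℕ} {κ₁ κ₂ : ℝ}

lemma crossKernel_nonneg (hκ₁ : 0 ≤ κ₁) (hκ : κ₁ < κ₂) {θ φ : ℝ} (hθ : θ ∈ Icc 0 π)
    (hφ : φ ∈ Icc 0 π) : 0 ≤ crossKernel j κ₁ κ₂ θ φ := by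
  rw [crossKernel_eq]
  exact mul_nonneg (mul_nonneg (pow_nonneg (sin_nonneg_of_mem_Icc hθ) j)
    (pow_nonneg (sin_nonneg_of_mem_Icc hφ) j)) (cosh_mul_cosh_sub_mul_nonneg hκ₁ hκ _ _)

lemma crossKernel_pos (hκ₁ : 0 ≤ κ₁) (hκ : κ₁ < κ₂) {θ φ : ℝ} (hθ : θ ∈ Ioo 0 π)
    (hφ : φ ∈ Ioo 0 π) (hcos : cos θ ^ 2 < cos φ ^ 2) : 0 < crossKernel j κ₁ κ₂ θ φ := by
  rw [crossKernel_eq]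
  exact mul_pos (mul_pos (pow_pos (sin_pos_of_mem_Ioo hθ) j) (pow_pos (sin_pos_of_mem_Ioo hφ) j))
    (mul_pos (by linarith) (by linarith [cosh_mul_cosh_lt_cosh_mul_cosh hκ₁ hκ hcos]))

lemma integral_crossKernel (θ : ℝ) :
    ∫ φ in (0:ℝ)..π, crossKernel j κ₁ κ₂ θ φ
      = coshWeight (j + 2) κ₁ θ * partitionFn j κ₂ - coshWeight (j + 2) κ₂ θ * partitionFn j κ₁
        - coshWeight j κ₁ θ * partitionFn (j + 2) κ₂
        + coshWeight j κ₂ θ * partitionFn (j + 2) κ₁ := by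
  unfold crossKernel
  rw [integral_sub_sub_add (by fun_prop) (by fun_prop) (by fun_prop) (by fun_prop)]
  simp only [integral_const_mul, ← partitionFn_eq_integral_coshWeight]

lemma integral_integral_crossKernel :
    ∫ θ in (0:ℝ)..π, ∫ φ in (0:ℝ)..π, crossKernel j κ₁ κ₂ θ φ
      = 2 * (partitionFn (j + 2) κ₁ * partitionFn j κ₂
        - partitionFn (j + 2) κ₂ * partitionFn j κ₁) := by
  simp only [integral_crossKernel]
  rw [integral_sub_sub_add (by fun_prop) (by fun_prop) (by fun_prop) (by fun_prop)]
  simp only [integral_mul_const, ← partitionFn_eq_integral_coshWeight]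
  ring

lemma integral_crossKernel_nonneg (hκ₁ : 0 ≤ κ₁) (hκ : κ₁ < κ₂) {θ : ℝ} (hθ : θ ∈ Icc 0 π) :
    0 ≤ ∫ φ in (0:ℝ)..π, crossKernel j κ₁ κ₂ θ φ :=
  integral_nonneg pi_pos.le fun _ hφ => crossKernel_nonneg hκ₁ hκ hθ hφ

lemma integral_crossKernel_pos (hκ₁ : 0 ≤ κ₁) (hκ : κ₁ < κ₂) {θ : ℝ}
    (hθ : θ ∈ Ioo (π / 3) (2 * π / 3)) : 0 < ∫ φ in (0:ℝ)..π, crossKernel j κ₁ κ₂ θ φ := by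
  have hθ' : θ ∈ Icc 0 π := ⟨by linarith [pi_pos, hθ.1], by linarith [pi_pos, hθ.2]⟩
  have hcosθ : cos θ ^ 2 < (1 / 2) ^ 2 := by
    rw [sq_lt_sq, abs_of_pos (one_half_pos (α := ℝ)), abs_lt]
    constructor
    · calc -(1 / 2) = cos (π - π / 3) := by rw [cos_pi_sub, cos_pi_div_three]
        _ < cos θ := cos_lt_cos_of_nonneg_of_le_pi hθ'.1 (by linarith [pi_pos]) (by linarith [hθ.2])
    · calc cos θ < cos (π / 3) := cos_lt_cos_of_nonneg_of_le_pi (by positivity) hθ'.2 hθ.1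
        _ = 1 / 2 := cos_pi_div_three
  refine intervalIntegral_pos_of_nonneg_of_pos_on (c := 0) (d := π / 3)
    (by unfold crossKernel; fun_prop) le_rfl (by positivity) (by linarith [pi_pos])
    (fun φ hφ => crossKernel_nonneg hκ₁ hκ hθ' hφ) fun φ hφ => ?_
  have hcosφ : 1 / 2 < cos φ := by
    rw [← cos_pi_div_three]
    exact cos_lt_cos_of_nonneg_of_le_pi hφ.1.le (by linarith [pi_pos]) hφ.2
  refine crossKernel_pos hκ₁ hκ ⟨by linarith [hθ'.1, hθ.1, pi_pos], by linarith [hθ.2, pi_pos]⟩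
    ⟨hφ.1, by linarith [hφ.2, pi_pos]⟩ (by nlinarith)

end crossKernel

lemma partitionFn_mul_lt (j : ℕ) {κ₁ κ₂ : ℝ} (hκ₁ : 0 ≤ κ₁) (hκ : κ₁ < κ₂) :
    partitionFn (j + 2) κ₂ * partitionFn j κ₁ < partitionFn (j + 2) κ₁ * partitionFn j κ₂ := by
  have hpos : 0 < ∫ θ in (0:ℝ)..π, ∫ φ in (0:ℝ)..π, crossKernel j κ₁ κ₂ θ φ :=
    intervalIntegral_pos_of_nonneg_of_pos_on
      (continuous_parametric_intervalIntegral_of_continuous'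
        (by unfold crossKernel; fun_prop) 0 π)
      (by positivity) (by linarith [pi_pos]) (by linarith [pi_pos])
      (fun _ hθ => integral_crossKernel_nonneg hκ₁ hκ hθ)
      fun _ hθ => integral_crossKernel_pos hκ₁ hκ hθ
  rw [integral_integral_crossKernel] at hpos
  linarith

lemma meanCos_le_one (j : ℕ) (κ : ℝ) : meanCos j κ ≤ 1 := by
  refine div_le_one_of_le₀ (integral_mono_on pi_pos.le ?_ ?_ fun θ hθ => ?_)
    (partitionFn_pos j κ).le
  any_goals apply Continuous.intervalIntegrable; fun_prop
  rw [mul_assoc]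
  exact mul_le_of_le_one_left (by have := sin_nonneg_of_mem_Icc hθ; positivity) (cos_le_one θ)

lemma meanCos_eq_mul_meanCosSlope (j : ℕ) (κ : ℝ) : meanCos j κ = κ * meanCosSlope j κ := by
  have := (partitionFn_pos j κ).ne'
  rw [meanCos, meanCosSlope, integral_cos_mul_exp_mul_sin_pow]
  field_simp

lemma meanCos_eq_mul_iff (j : ℕ) {κ : ℝ} (hκ : 0 < κ) (σ : ℝ) :
    meanCos j κ = σ * κ ↔ meanCosSlope j κ = σ := by
  rw [meanCos_eq_mul_meanCosSlope, mul_comm σ, mul_right_inj' hκ.ne']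

lemma meanCosSlope_pos (j : ℕ) (κ : ℝ) : 0 < meanCosSlope j κ :=
  div_pos (partitionFn_pos _ _) (mul_pos (by positivity) (partitionFn_pos _ _))

lemma continuous_meanCosSlope (j : ℕ) : Continuous (meanCosSlope j) :=
  (continuous_partitionFn _).div (continuous_const.mul (continuous_partitionFn _))
    fun κ => (mul_pos (by positivity) (partitionFn_pos _ _)).ne'

lemma meanCosSlope_zero (j : ℕ) : meanCosSlope j 0 = 1 / (j + 2) := by
  have := (partitionFn_pos j 0).ne'
  rw [meanCosSlope, partitionFn_add_two_zero]
  field_simp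

lemma strictAntiOn_meanCosSlope (j : ℕ) : StrictAntiOn (meanCosSlope j) (Ici 0) := by
  intro κ₁ hκ₁ κ₂ _ hκ
  rw [meanCosSlope, meanCosSlope, div_lt_div_iff₀ (mul_pos (by positivity) (partitionFn_pos _ _))
    (mul_pos (by positivity) (partitionFn_pos _ _))]
  nlinarith [partitionFn_mul_lt j hκ₁ hκ, (by positivity : (0:ℝ) < j + 1)]

lemma meanCosSlope_le_inv (j : ℕ) {κ : ℝ} (hκ : 0 < κ) : meanCosSlope j κ ≤ κ⁻¹ := by
  rw [le_inv_comm₀ (meanCosSlope_pos j κ) hκ, ← one_div, le_div_iff₀ (meanCosSlope_pos j κ),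
    ← meanCos_eq_mul_meanCosSlope]
  exact meanCos_le_one j κ

lemma tendsto_meanCosSlope_atTop (j : ℕ) : Tendsto (meanCosSlope j) atTop (𝓝 0) :=
  tendsto_of_tendsto_of_tendsto_of_le_of_le' tendsto_const_nhds tendsto_inv_atTop_zero
    (.of_forall fun κ => (meanCosSlope_pos j κ).le)
    ((eventually_gt_atTop 0).mono fun _ hκ => meanCosSlope_le_inv j hκ)

end VonMisesFisher

open VonMisesFisher

/-- The function `σ̃(κ) = c(κ)/κ`, with
`c(κ) = (∫_0^π cosθ e^{κcosθ} sin^{n-2}θ dθ)/(∫_0^π e^{κcosθ} sin^{n-2}θ dθ)`,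
extends continuously to `κ = 0` with value `1/n`, is strictly decreasing on `(0,∞)`,
and tends to `0` as `κ → ∞`. Consequently, for `σ ≥ 1/n` the equation `c(κ) = σκ`
has the unique nonnegative solution `κ = 0`, while for `0 < σ < 1/n` it has exactly
one additional positive solution. -/
theorem stmt3 (n : ℕ) (hn : 2 ≤ n)
    (c : ℝ → ℝ)
    (hc : ∀ κ : ℝ, c κ =
      (∫ θ in (0:ℝ)..π, Real.cos θ * Real.exp (κ * Real.cos θ) * (Real.sin θ) ^ (n - 2)) /
      (∫ θ in (0:ℝ)..π, Real.exp (κ * Real.cos θ) * (Real.sin θ) ^ (n - 2)))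
    (σt : ℝ → ℝ) (hσt : ∀ κ : ℝ, σt κ = c κ / κ) :
    Tendsto σt (nhdsWithin 0 (Set.Ioi 0)) (nhds (1 / (n : ℝ))) ∧
    StrictAntiOn σt (Set.Ioi 0) ∧
    Tendsto σt atTop (nhds 0) ∧
    (∀ σ : ℝ, 1 / (n : ℝ) ≤ σ → {κ : ℝ | 0 ≤ κ ∧ c κ = σ * κ} = {0}) ∧
    (∀ σ : ℝ, 0 < σ → σ < 1 / (n : ℝ) →
      c 0 = σ * 0 ∧ ∃! κ : ℝ, 0 < κ ∧ c κ = σ * κ) := by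
  obtain rfl : c = meanCos (n - 2) := funext hc
  have hσt_eq : EqOn (meanCosSlope (n - 2)) σt (Ioi 0) := fun κ hκ => by
    rw [hσt, meanCos_eq_mul_meanCosSlope, mul_div_cancel_left₀ _ (ne_of_gt hκ)]
  have hg0 : meanCosSlope (n - 2) 0 = 1 / n := by
    rw [meanCosSlope_zero, Nat.cast_sub hn]
    ring_nf
  have hanti := strictAntiOn_meanCosSlope (n - 2)
  have hc0 : meanCos (n - 2) 0 = 0 := by rw [meanCos_eq_mul_meanCosSlope, zero_mul]
  refine ⟨?_, (hanti.mono Ioi_subset_Ici_self).congr hσt_eq, ?_, fun σ hσ => ?_,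
    fun σ hσ hσn => ⟨by rw [hc0, mul_zero], ?_⟩⟩
  · rw [← hg0]
    exact (continuous_meanCosSlope _).continuousWithinAt.congr'
      (eventually_nhdsWithin_of_forall hσt_eq)
  · exact (tendsto_meanCosSlope_atTop _).congr' ((eventually_gt_atTop 0).mono hσt_eq)
  · refine eq_singleton_iff_unique_mem.2 ⟨⟨le_rfl, by rw [hc0, mul_zero]⟩, fun κ ⟨hκ, hcκ⟩ => ?_⟩
    by_contra hκ0
    have hκpos := lt_of_le_of_ne hκ (Ne.symm hκ0)
    have := hanti self_mem_Ici hκpos.le hκpos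
    rw [(meanCos_eq_mul_iff _ hκpos σ).1 hcκ, hg0] at this
    linarith
  · refine (existsUnique_congr fun κ => and_congr_right fun hκ => meanCos_eq_mul_iff _ hκ σ).2 ?_
    exact existsUnique_pos_eq_of_strictAntiOn (continuous_meanCosSlope _).continuousOn hanti
      (tendsto_meanCosSlope_atTop _) hσ (hg0 ▸ hσn)
end

section
/- For any smooth function g on the unit sphere S ⊂ ℝⁿ, ∫_S |∇g|² dM_{κΩ} ≥ (n−1) e^{−2κ} ∫_S (g − ⟨g⟩)² dM_{κΩ}, where dM_{κΩ} = M_{κΩ}(ω) dω and ⟨g⟩ = ∫_S g dM_{κΩ}. -/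
open MeasureTheory Real intervalIntegral
open scoped RealInnerProductSpace BigOperators

noncomputable section

/-- The tangential (spherical) gradient of a function on `ℝⁿ`, at points of the unit
sphere: the orthogonal projection of the full gradient onto the tangent space. -/
def gradS {n : ℕ} (g : EuclideanSpace ℝ (Fin n) → ℝ) (x : EuclideanSpace ℝ (Fin n)) :
    EuclideanSpace ℝ (Fin n) :=
  gradient g x - ⟪gradient g x, x⟫ • x

/-- The tangential (spherical) divergence of a vector field, at points of the unit
sphere: the trace of the derivative composed with the tangential projection. -/
def divS {n : ℕ} (A : EuclideanSpace ℝ (Fin n) → EuclideanSpace ℝ (Fin n))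
    (x : EuclideanSpace ℝ (Fin n)) : ℝ :=
  (∑ i : Fin n, ⟪fderiv ℝ A x (EuclideanSpace.single i 1), EuclideanSpace.single i 1⟫)
    - ⟪fderiv ℝ A x x, x⟫

/-- The Laplace–Beltrami operator on the unit sphere. -/
def lapS {n : ℕ} (g : EuclideanSpace ℝ (Fin n) → ℝ) (x : EuclideanSpace ℝ (Fin n)) : ℝ :=
  divS (gradS g) x

/-- A measure `μ` on the unit sphere of `ℝⁿ` is the uniform probability measure if it is a
rotation-invariant probability measure. -/
def IsUniformProb {n : ℕ} (μ : Measure (Metric.sphere (0 : EuclideanSpace ℝ (Fin n)) 1)) :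
    Prop :=
  IsProbabilityMeasure μ ∧
    ∀ T : EuclideanSpace ℝ (Fin n) ≃ₗᵢ[ℝ] EuclideanSpace ℝ (Fin n),
      Measure.map (fun ω : Metric.sphere (0 : EuclideanSpace ℝ (Fin n)) 1 =>
        (⟨T ω, by
          rw [mem_sphere_zero_iff_norm, T.norm_map]
          exact mem_sphere_zero_iff_norm.mp ω.2⟩ :
          Metric.sphere (0 : EuclideanSpace ℝ (Fin n)) 1)) μ = μ

/-- Poincaré inequality for the Fisher–Von Mises measure: for any smooth function `g` on
the unit sphere `S ⊂ ℝⁿ`, `∫ |∇g|² dM_{κΩ} ≥ (n−1) e^{−2κ} ∫ (g − ⟨g⟩)² dM_{κΩ}`,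
assuming the Poincaré inequality with constant `n−1` for the uniform measure. -/
theorem stmt8 (n : ℕ) (hn : 2 ≤ n)
    (μ : Measure (Metric.sphere (0 : EuclideanSpace ℝ (Fin n)) 1)) (hμ : IsUniformProb μ)
    (hpoincare : ∀ h : EuclideanSpace ℝ (Fin n) → ℝ, ContDiff ℝ (⊤ : ℕ∞) h →
      ((n : ℝ) - 1) * ∫ ω : Metric.sphere (0 : EuclideanSpace ℝ (Fin n)) 1,
          (h ω - ∫ υ : Metric.sphere (0 : EuclideanSpace ℝ (Fin n)) 1, h υ ∂μ) ^ 2 ∂μ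
        ≤ ∫ ω : Metric.sphere (0 : EuclideanSpace ℝ (Fin n)) 1, ‖gradS h ω‖ ^ 2 ∂μ)
    (Ω : EuclideanSpace ℝ (Fin n)) (hΩ : ‖Ω‖ = 1) (κ : ℝ) (hκ : 0 ≤ κ)
    (M : EuclideanSpace ℝ (Fin n) → ℝ)
    (hM : ∀ ω : EuclideanSpace ℝ (Fin n), M ω = Real.exp (κ * ⟪ω, Ω⟫) /
      (∫ υ : Metric.sphere (0 : EuclideanSpace ℝ (Fin n)) 1,
        Real.exp (κ * ⟪(υ : EuclideanSpace ℝ (Fin n)), Ω⟫) ∂μ))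
    (g : EuclideanSpace ℝ (Fin n) → ℝ) (hg : ContDiff ℝ (⊤ : ℕ∞) g) (gbar : ℝ)
    (hgbar : gbar = ∫ ω : Metric.sphere (0 : EuclideanSpace ℝ (Fin n)) 1, g ω * M ω ∂μ) :
    ((n : ℝ) - 1) * Real.exp (-2 * κ) *
        ∫ ω : Metric.sphere (0 : EuclideanSpace ℝ (Fin n)) 1, (g ω - gbar) ^ 2 * M ω ∂μ
      ≤ ∫ ω : Metric.sphere (0 : EuclideanSpace ℝ (Fin n)) 1, ‖gradS g ω‖ ^ 2 * M ω ∂μ := by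
  classical
  obtain ⟨hprob, -⟩ := hμ
  haveI := hprob
  have hint : ∀ f : (Metric.sphere (0 : EuclideanSpace ℝ (Fin n)) 1) → ℝ, Continuous f →
      Integrable f μ := fun f hf =>
    hf.integrable_of_hasCompactSupport (HasCompactSupport.of_compactSpace f)
  set Z := ∫ υ : Metric.sphere (0 : EuclideanSpace ℝ (Fin n)) 1,
      Real.exp (κ * ⟪(υ : EuclideanSpace ℝ (Fin n)), Ω⟫) ∂μ with hZdef
  have hcE : Continuous fun ω : Metric.sphere (0 : EuclideanSpace ℝ (Fin n)) 1 =>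
      Real.exp (κ * ⟪(ω : EuclideanSpace ℝ (Fin n)), Ω⟫) :=
    Real.continuous_exp.comp (continuous_const.mul
      (continuous_subtype_val.inner continuous_const))
  have hineq : ∀ ω : Metric.sphere (0 : EuclideanSpace ℝ (Fin n)) 1,
      |⟪(ω : EuclideanSpace ℝ (Fin n)), Ω⟫| ≤ 1 := by
    intro ω
    have h1 : ‖(ω : EuclideanSpace ℝ (Fin n))‖ = 1 := mem_sphere_zero_iff_norm.mp ω.2
    calc |⟪(ω : EuclideanSpace ℝ (Fin n)), Ω⟫| ≤ ‖(ω : EuclideanSpace ℝ (Fin n))‖ * ‖Ω‖ :=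
          abs_real_inner_le_norm _ _
      _ = 1 := by rw [h1, hΩ, one_mul]
  have hub : ∀ ω : Metric.sphere (0 : EuclideanSpace ℝ (Fin n)) 1,
      Real.exp (κ * ⟪(ω : EuclideanSpace ℝ (Fin n)), Ω⟫) ≤ Real.exp κ := by
    intro ω
    apply Real.exp_le_exp.mpr
    have := (abs_le.mp (hineq ω)).2
    nlinarith
  have hlb : ∀ ω : Metric.sphere (0 : EuclideanSpace ℝ (Fin n)) 1,
      Real.exp (-κ) ≤ Real.exp (κ * ⟪(ω : EuclideanSpace ℝ (Fin n)), Ω⟫) := by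
    intro ω
    apply Real.exp_le_exp.mpr
    have := (abs_le.mp (hineq ω)).1
    nlinarith
  have hZlb : Real.exp (-κ) ≤ Z := by
    calc Real.exp (-κ)
        = ∫ _ : Metric.sphere (0 : EuclideanSpace ℝ (Fin n)) 1, Real.exp (-κ) ∂μ := by
          simp
      _ ≤ Z := MeasureTheory.integral_mono (integrable_const _) (hint _ hcE) hlb
  have hZpos : 0 < Z := lt_of_lt_of_le (Real.exp_pos _) hZlb
  have hZub : Z ≤ Real.exp κ := by
    calc Z ≤ ∫ _ : Metric.sphere (0 : EuclideanSpace ℝ (Fin n)) 1, Real.exp κ ∂μ :=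
          MeasureTheory.integral_mono (hint _ hcE) (integrable_const _) hub
      _ = Real.exp κ := by simp
  have hMeq : ∀ ω : Metric.sphere (0 : EuclideanSpace ℝ (Fin n)) 1,
      M (ω : EuclideanSpace ℝ (Fin n)) =
        Real.exp (κ * ⟪(ω : EuclideanSpace ℝ (Fin n)), Ω⟫) / Z := fun ω => hM _
  have hMfun : (fun ω : Metric.sphere (0 : EuclideanSpace ℝ (Fin n)) 1 =>
      M (ω : EuclideanSpace ℝ (Fin n))) = fun ω : Metric.sphere (0 : EuclideanSpace ℝ (Fin n)) 1 =>
        Real.exp (κ * ⟪(ω : EuclideanSpace ℝ (Fin n)), Ω⟫) / Z := funext hMeq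
  have hMcont : Continuous fun ω : Metric.sphere (0 : EuclideanSpace ℝ (Fin n)) 1 =>
      M (ω : EuclideanSpace ℝ (Fin n)) := by
    rw [hMfun]; exact hcE.div_const _
  have hMub : ∀ ω : Metric.sphere (0 : EuclideanSpace ℝ (Fin n)) 1,
      M (ω : EuclideanSpace ℝ (Fin n)) ≤ Real.exp κ / Z := by
    intro ω; rw [hMeq ω]; gcongr
    have := (abs_le.mp (hineq ω)).2
    nlinarith
  have hMlb : ∀ ω : Metric.sphere (0 : EuclideanSpace ℝ (Fin n)) 1,
      Real.exp (-κ) / Z ≤ M (ω : EuclideanSpace ℝ (Fin n)) := by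
    intro ω; rw [hMeq ω]; gcongr
    have := (abs_le.mp (hineq ω)).1
    nlinarith
  have hMint1 : (∫ ω : Metric.sphere (0 : EuclideanSpace ℝ (Fin n)) 1,
      M (ω : EuclideanSpace ℝ (Fin n)) ∂μ) = 1 := by
    rw [hMfun, MeasureTheory.integral_div, ← hZdef, div_self hZpos.ne']
  have hgc : Continuous fun ω : Metric.sphere (0 : EuclideanSpace ℝ (Fin n)) 1 =>
      g (ω : EuclideanSpace ℝ (Fin n)) := hg.continuous.comp continuous_subtype_val
  have hgradc : Continuous (gradient g) := by
    have h1 : Continuous (fderiv ℝ g) := hg.continuous_fderiv (by simp)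
    exact (InnerProductSpace.toDual ℝ (EuclideanSpace ℝ (Fin n))).symm.continuous.comp h1
  have hgradSc : Continuous (gradS g) := by
    unfold gradS
    exact hgradc.sub ((hgradc.inner (𝕜 := ℝ) continuous_id).smul continuous_id :)
  have hnc : Continuous fun ω : Metric.sphere (0 : EuclideanSpace ℝ (Fin n)) 1 =>
      ‖gradS g (ω : EuclideanSpace ℝ (Fin n))‖ ^ 2 :=
    ((hgradSc.comp continuous_subtype_val).norm).pow 2
  set m := ∫ υ : Metric.sphere (0 : EuclideanSpace ℝ (Fin n)) 1,
      g (υ : EuclideanSpace ℝ (Fin n)) ∂μ with hmdef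
  set I2 := ∫ ω : Metric.sphere (0 : EuclideanSpace ℝ (Fin n)) 1,
      (g (ω : EuclideanSpace ℝ (Fin n)) - m) ^ 2 * M (ω : EuclideanSpace ℝ (Fin n)) ∂μ
    with hI2
  set I3 := ∫ ω : Metric.sphere (0 : EuclideanSpace ℝ (Fin n)) 1,
      (g (ω : EuclideanSpace ℝ (Fin n)) - m) ^ 2 ∂μ with hI3
  set I5 := ∫ ω : Metric.sphere (0 : EuclideanSpace ℝ (Fin n)) 1,
      ‖gradS g (ω : EuclideanSpace ℝ (Fin n))‖ ^ 2 * M (ω : EuclideanSpace ℝ (Fin n)) ∂μ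
    with hI5
  have hc2 : Continuous fun ω : Metric.sphere (0 : EuclideanSpace ℝ (Fin n)) 1 =>
      (g (ω : EuclideanSpace ℝ (Fin n)) - m) ^ 2 * M (ω : EuclideanSpace ℝ (Fin n)) :=
    ((hgc.sub continuous_const).pow 2).mul hMcont
  have hc3 : Continuous fun ω : Metric.sphere (0 : EuclideanSpace ℝ (Fin n)) 1 =>
      (g (ω : EuclideanSpace ℝ (Fin n)) - m) ^ 2 :=
    (hgc.sub continuous_const).pow 2
  have hcgM : Continuous fun ω : Metric.sphere (0 : EuclideanSpace ℝ (Fin n)) 1 =>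
      g (ω : EuclideanSpace ℝ (Fin n)) * M (ω : EuclideanSpace ℝ (Fin n)) := hgc.mul hMcont
  -- Step A
  have hstepA : (∫ ω : Metric.sphere (0 : EuclideanSpace ℝ (Fin n)) 1,
      (g (ω : EuclideanSpace ℝ (Fin n)) - gbar) ^ 2 * M (ω : EuclideanSpace ℝ (Fin n)) ∂μ)
      ≤ I2 := by
    have key : (∫ ω : Metric.sphere (0 : EuclideanSpace ℝ (Fin n)) 1,
        (g (ω : EuclideanSpace ℝ (Fin n)) - gbar) ^ 2 * M (ω : EuclideanSpace ℝ (Fin n)) ∂μ)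
        = I2 + ((2 * (m - gbar)) * ∫ ω : Metric.sphere (0 : EuclideanSpace ℝ (Fin n)) 1,
              g (ω : EuclideanSpace ℝ (Fin n)) * M (ω : EuclideanSpace ℝ (Fin n)) ∂μ
            - ((m - gbar) * (gbar + m)) * ∫ ω : Metric.sphere (0 : EuclideanSpace ℝ (Fin n)) 1,
              M (ω : EuclideanSpace ℝ (Fin n)) ∂μ) := by
      have hA : Integrable (fun ω : Metric.sphere (0 : EuclideanSpace ℝ (Fin n)) 1 =>
          (2 * (m - gbar)) * (g (ω : EuclideanSpace ℝ (Fin n)) *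
            M (ω : EuclideanSpace ℝ (Fin n)))) μ := hint _ (continuous_const.mul hcgM)
      have hB : Integrable (fun ω : Metric.sphere (0 : EuclideanSpace ℝ (Fin n)) 1 =>
          ((m - gbar) * (gbar + m)) * M (ω : EuclideanSpace ℝ (Fin n))) μ :=
        hint _ (continuous_const.mul hMcont)
      have e1 : (fun ω : Metric.sphere (0 : EuclideanSpace ℝ (Fin n)) 1 =>
          (g (ω : EuclideanSpace ℝ (Fin n)) - gbar) ^ 2 * M (ω : EuclideanSpace ℝ (Fin n)))
          = fun ω : Metric.sphere (0 : EuclideanSpace ℝ (Fin n)) 1 =>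
            (g (ω : EuclideanSpace ℝ (Fin n)) - m) ^ 2 * M (ω : EuclideanSpace ℝ (Fin n))
              + ((2 * (m - gbar)) * (g (ω : EuclideanSpace ℝ (Fin n)) *
                  M (ω : EuclideanSpace ℝ (Fin n)))
                - ((m - gbar) * (gbar + m)) * M (ω : EuclideanSpace ℝ (Fin n))) := by
        funext ω; ring
      have hAB : Integrable (fun ω : Metric.sphere (0 : EuclideanSpace ℝ (Fin n)) 1 =>
          (2 * (m - gbar)) * (g (ω : EuclideanSpace ℝ (Fin n)) *
              M (ω : EuclideanSpace ℝ (Fin n)))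
            - ((m - gbar) * (gbar + m)) * M (ω : EuclideanSpace ℝ (Fin n))) μ :=
        hint _ ((continuous_const.mul hcgM).sub (continuous_const.mul hMcont))
      rw [e1, MeasureTheory.integral_add (hint _ hc2) hAB,
        MeasureTheory.integral_sub hA hB, MeasureTheory.integral_const_mul,
        MeasureTheory.integral_const_mul, hI2]
    rw [key, ← hgbar, hMint1]
    nlinarith [sq_nonneg (m - gbar)]
  -- Step B
  have hstepB : I2 ≤ Real.exp κ / Z * I3 := by
    rw [hI3, ← MeasureTheory.integral_const_mul]
    refine MeasureTheory.integral_mono (hint _ hc2) (hint _ (continuous_const.mul hc3)) fun ω => ?_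
    have h1 := hMub ω
    have h2 : (0 : ℝ) ≤ (g (ω : EuclideanSpace ℝ (Fin n)) - m) ^ 2 := sq_nonneg _
    calc (g (ω : EuclideanSpace ℝ (Fin n)) - m) ^ 2 * M (ω : EuclideanSpace ℝ (Fin n))
        ≤ (g (ω : EuclideanSpace ℝ (Fin n)) - m) ^ 2 * (Real.exp κ / Z) :=
          mul_le_mul_of_nonneg_left h1 h2
      _ = Real.exp κ / Z * (g (ω : EuclideanSpace ℝ (Fin n)) - m) ^ 2 := mul_comm _ _
  -- Step C
  have hstepC : ((n : ℝ) - 1) * I3 ≤ ∫ ω : Metric.sphere (0 : EuclideanSpace ℝ (Fin n)) 1,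
      ‖gradS g (ω : EuclideanSpace ℝ (Fin n))‖ ^ 2 ∂μ := hpoincare g hg
  -- Step D
  have hstepD : (∫ ω : Metric.sphere (0 : EuclideanSpace ℝ (Fin n)) 1,
      ‖gradS g (ω : EuclideanSpace ℝ (Fin n))‖ ^ 2 ∂μ) ≤ Z * Real.exp κ * I5 := by
    rw [hI5, ← MeasureTheory.integral_const_mul]
    refine MeasureTheory.integral_mono (hint _ hnc)
      (hint _ (continuous_const.mul (hnc.mul hMcont))) fun ω => ?_
    have h1 := hMlb ω
    have h2 : (0 : ℝ) ≤ ‖gradS g (ω : EuclideanSpace ℝ (Fin n))‖ ^ 2 := sq_nonneg _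
    have h3 : (1 : ℝ) ≤ Z * Real.exp κ * M (ω : EuclideanSpace ℝ (Fin n)) := by
      have h5 : Real.exp κ * Real.exp (-κ) = 1 := by
        rw [← Real.exp_add, show κ + -κ = 0 by ring, Real.exp_zero]
      have h4 : Z * Real.exp κ * (Real.exp (-κ) / Z) = 1 := by
        calc Z * Real.exp κ * (Real.exp (-κ) / Z)
            = Real.exp κ * Real.exp (-κ) * (Z / Z) := by ring
          _ = 1 := by rw [h5, div_self hZpos.ne', one_mul]
      calc (1 : ℝ) = Z * Real.exp κ * (Real.exp (-κ) / Z) := h4.symm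
        _ ≤ Z * Real.exp κ * M (ω : EuclideanSpace ℝ (Fin n)) :=
            mul_le_mul_of_nonneg_left h1 (by positivity)
    nlinarith
  have hn1 : (0 : ℝ) ≤ (n : ℝ) - 1 := by
    have : (2 : ℝ) ≤ (n : ℝ) := by exact_mod_cast hn
    linarith
  have hexp1 : Real.exp (-2 * κ) * Real.exp κ * Real.exp κ = 1 := by
    rw [← Real.exp_add, ← Real.exp_add, show -2 * κ + κ + κ = 0 by ring, Real.exp_zero]
  have hI3nn : 0 ≤ I3 := MeasureTheory.integral_nonneg fun ω => sq_nonneg _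
  calc ((n : ℝ) - 1) * Real.exp (-2 * κ) *
        ∫ ω : Metric.sphere (0 : EuclideanSpace ℝ (Fin n)) 1,
          (g (ω : EuclideanSpace ℝ (Fin n)) - gbar) ^ 2 * M (ω : EuclideanSpace ℝ (Fin n)) ∂μ
      ≤ ((n : ℝ) - 1) * Real.exp (-2 * κ) * I2 :=
        mul_le_mul_of_nonneg_left hstepA (by positivity)
    _ ≤ ((n : ℝ) - 1) * Real.exp (-2 * κ) * (Real.exp κ / Z * I3) :=
        mul_le_mul_of_nonneg_left hstepB (by positivity)
    _ = Real.exp (-2 * κ) * (Real.exp κ / Z) * (((n : ℝ) - 1) * I3) := by ring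
    _ ≤ Real.exp (-2 * κ) * (Real.exp κ / Z) *
          ∫ ω : Metric.sphere (0 : EuclideanSpace ℝ (Fin n)) 1,
            ‖gradS g (ω : EuclideanSpace ℝ (Fin n))‖ ^ 2 ∂μ :=
        mul_le_mul_of_nonneg_left hstepC (by positivity)
    _ ≤ Real.exp (-2 * κ) * (Real.exp κ / Z) * (Z * Real.exp κ * I5) :=
        mul_le_mul_of_nonneg_left hstepD (by positivity)
    _ = (Real.exp (-2 * κ) * Real.exp κ * Real.exp κ) * (Z / Z) * I5 := by ring
    _ = 1 * 1 * I5 := by rw [hexp1, div_self hZpos.ne']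
    _ = I5 := by ring
end
end

section
/- A smooth positive probability density f on the unit sphere satisfies D(f) = 0 (zero entropy dissipation) if and only if there exists a constant C with σ ln f − J[f]·ω = C, i.e. f is a Fisher–Von Mises distribution f = M_{κΩ} with κΩ = σ^{−1}J[f] (including the uniform distribution κ = 0), and the compatibility condition c(κ) = σκ holds. -/
open MeasureTheory Real intervalIntegral
open scoped RealInnerProductSpace BigOperators

noncomputable section

/-- The momentum (flux) `J[f] = ∫_S ω f(ω) dω` of a density on the unit sphere. -/
def Jflux {n : ℕ} (μ : Measure (Metric.sphere (0 : EuclideanSpace ℝ (Fin n)) 1))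
    (f : EuclideanSpace ℝ (Fin n) → ℝ) : EuclideanSpace ℝ (Fin n) :=
  ∫ ω : Metric.sphere (0 : EuclideanSpace ℝ (Fin n)) 1, f ω • (ω : EuclideanSpace ℝ (Fin n)) ∂μ

namespace Stmt15Aux

variable {n : ℕ}

lemma inner_gradient (g : EuclideanSpace ℝ (Fin n) → ℝ) (x v : EuclideanSpace ℝ (Fin n)) :
    ⟪gradient g x, v⟫ = fderiv ℝ g x v :=
  InnerProductSpace.toDual_symm_apply

lemma ortho_facts {x b : EuclideanSpace ℝ (Fin n)} (hx : ‖x‖ = 1) (hb : ‖b‖ = 1)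
    (hxb : ⟪x, b⟫ = 0) :
    ⟪x, x⟫ = 1 ∧ ⟪b, b⟫ = 1 ∧ ⟪b, x⟫ = 0 := by
  refine ⟨?_, ?_, ?_⟩
  · rw [real_inner_self_eq_norm_sq, hx]; norm_num
  · rw [real_inner_self_eq_norm_sq, hb]; norm_num
  · rw [real_inner_comm]; exact hxb

lemma curve_norm {x b : EuclideanSpace ℝ (Fin n)} (hx : ‖x‖ = 1) (hb : ‖b‖ = 1)
    (hxb : ⟪x, b⟫ = 0) (t : ℝ) : ‖Real.cos t • x + Real.sin t • b‖ = 1 := by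
  obtain ⟨hxx, hbb, hbx⟩ := ortho_facts hx hb hxb
  have h : ‖Real.cos t • x + Real.sin t • b‖ ^ 2 = 1 := by
    rw [← real_inner_self_eq_norm_sq]
    simp only [inner_add_left, inner_add_right, real_inner_smul_left, real_inner_smul_right,
      hxb, hbx, hxx, hbb]
    nlinarith [Real.sin_sq_add_cos_sq t]
  nlinarith [norm_nonneg (Real.cos t • x + Real.sin t • b)]

lemma curve_inner_deriv {x b : EuclideanSpace ℝ (Fin n)} (hx : ‖x‖ = 1) (hb : ‖b‖ = 1)
    (hxb : ⟪x, b⟫ = 0) (t : ℝ) :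
    ⟪Real.cos t • x + Real.sin t • b, (-Real.sin t) • x + Real.cos t • b⟫ = 0 := by
  obtain ⟨hxx, hbb, hbx⟩ := ortho_facts hx hb hxb
  simp only [inner_add_left, inner_add_right, real_inner_smul_left, real_inner_smul_right,
    hxb, hbx, hxx, hbb]
  ring

lemma curve_hasDerivAt (g : EuclideanSpace ℝ (Fin n) → ℝ) (x b : EuclideanSpace ℝ (Fin n))
    (t : ℝ)
    (hdiff : DifferentiableAt ℝ g (Real.cos t • x + Real.sin t • b)) :
    HasDerivAt (fun s => g (Real.cos s • x + Real.sin s • b))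
      ⟪gradient g (Real.cos t • x + Real.sin t • b), (-Real.sin t) • x + Real.cos t • b⟫ t := by
  have hγ : HasDerivAt (fun s => Real.cos s • x + Real.sin s • b)
      ((-Real.sin t) • x + Real.cos t • b) t :=
    ((Real.hasDerivAt_cos t).smul_const x).add ((Real.hasDerivAt_sin t).smul_const b)
  have h := hdiff.hasFDerivAt.comp_hasDerivAt t hγ
  rw [inner_gradient]
  exact h

/-- there is a unit vector orthogonal to `x` when `2 ≤ n` -/
lemma exists_ortho (hn : 2 ≤ n) (x : EuclideanSpace ℝ (Fin n)) (hx : ‖x‖ = 1) :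
    ∃ b : EuclideanSpace ℝ (Fin n), ‖b‖ = 1 ∧ ⟪x, b⟫ = 0 := by
  have hx0 : x ≠ 0 := by intro h; rw [h, norm_zero] at hx; norm_num at hx
  have hne : (ℝ ∙ x)ᗮ ≠ ⊥ := by
    intro h
    rw [Submodule.orthogonal_eq_bot_iff] at h
    have h1 : Module.finrank ℝ (ℝ ∙ x) = 1 := finrank_span_singleton hx0
    have h2 : Module.finrank ℝ (EuclideanSpace ℝ (Fin n)) = n := finrank_euclideanSpace_fin
    rw [h] at h1
    rw [finrank_top] at h1
    omega
  obtain ⟨v, hv, hv0⟩ := Submodule.exists_mem_ne_zero_of_ne_bot hne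
  refine ⟨‖v‖⁻¹ • v, ?_, ?_⟩
  · rw [norm_smul, norm_inv, norm_norm, inv_mul_cancel₀ (norm_ne_zero_iff.mpr hv0)]
  · rw [real_inner_smul_right]
    have : ⟪x, v⟫ = 0 := by
      have := (Submodule.mem_orthogonal _ v).mp hv x (Submodule.mem_span_singleton_self x)
      simpa [real_inner_comm] using this
    rw [this, mul_zero]

/-- if the spherical gradient vanishes on the sphere, `g` is constant on the sphere -/
lemma eq_on_sphere (hn : 2 ≤ n) (g : EuclideanSpace ℝ (Fin n) → ℝ)
    (hdiff : ∀ x : EuclideanSpace ℝ (Fin n), ‖x‖ = 1 → DifferentiableAt ℝ g x)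
    (hgrad : ∀ x : EuclideanSpace ℝ (Fin n), ‖x‖ = 1 → gradS g x = 0)
    {x y : EuclideanSpace ℝ (Fin n)} (hx : ‖x‖ = 1) (hy : ‖y‖ = 1) : g x = g y := by
  have hxx : ⟪x, x⟫ = 1 := by rw [real_inner_self_eq_norm_sq, hx]; norm_num
  have hyy : ⟪y, y⟫ = 1 := by rw [real_inner_self_eq_norm_sq, hy]; norm_num
  set c : ℝ := ⟪y, x⟫ with hc
  have hcle : |c| ≤ 1 := by
    rw [hc]
    have := abs_real_inner_le_norm y x
    rw [hx, hy] at this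
    simpa using this
  set w : EuclideanSpace ℝ (Fin n) := y - c • x with hw
  have hwx : ⟪x, w⟫ = 0 := by
    rw [hw, inner_sub_right, real_inner_smul_right, hxx, mul_one, real_inner_comm y x, hc]
    exact sub_self _
  have hwsq : ‖w‖ ^ 2 = 1 - c ^ 2 := by
    rw [← real_inner_self_eq_norm_sq, hw]
    rw [hc]
    simp only [inner_sub_left, inner_sub_right, real_inner_smul_left, real_inner_smul_right,
      hxx, hyy, real_inner_comm y x]
    ring
  obtain ⟨b, hb, hxb, hwb⟩ :
      ∃ b : EuclideanSpace ℝ (Fin n), ‖b‖ = 1 ∧ ⟪x, b⟫ = 0 ∧ w = ‖w‖ • b := by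
    by_cases hw0 : w = 0
    · obtain ⟨b, hb, hxb⟩ := exists_ortho hn x hx
      exact ⟨b, hb, hxb, by rw [hw0, norm_zero, zero_smul]⟩
    · refine ⟨‖w‖⁻¹ • w, ?_, ?_, ?_⟩
      · rw [norm_smul, norm_inv, norm_norm, inv_mul_cancel₀ (norm_ne_zero_iff.mpr hw0)]
      · rw [real_inner_smul_right, hwx, mul_zero]
      · rw [smul_smul, mul_inv_cancel₀ (norm_ne_zero_iff.mpr hw0), one_smul]
  have hd : ∀ s : ℝ, HasDerivAt (fun s => g (Real.cos s • x + Real.sin s • b)) 0 s := by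
    intro s
    have hds := curve_hasDerivAt g x b s (hdiff _ (curve_norm hx hb hxb s))
    have h0 : ⟪gradient g (Real.cos s • x + Real.sin s • b),
        (-Real.sin s) • x + Real.cos s • b⟫ = 0 := by
      have hg := hgrad _ (curve_norm hx hb hxb s)
      rw [gradS, sub_eq_zero] at hg
      rw [hg, real_inner_smul_left, curve_inner_deriv hx hb hxb s, mul_zero]
    rwa [h0] at hds
  have hconst := is_const_of_deriv_eq_zero (f := fun s => g (Real.cos s • x + Real.sin s • b))
    (fun s => (hd s).differentiableAt) (fun s => (hd s).deriv) 0 (Real.arccos c)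
  have h0 : Real.cos 0 • x + Real.sin 0 • b = x := by simp
  have ht0 : Real.cos (Real.arccos c) • x + Real.sin (Real.arccos c) • b = y := by
    rw [Real.cos_arccos (neg_le_of_abs_le hcle) (le_of_abs_le hcle), Real.sin_arccos]
    have : Real.sqrt (1 - c ^ 2) = ‖w‖ := by
      rw [← hwsq, Real.sqrt_sq (norm_nonneg w)]
    rw [this, ← hwb, hw]
    abel
  rw [h0, ht0] at hconst
  exact hconst

/-- if `g` is constant on the sphere, then the spherical gradient vanishes on the sphere -/
lemma gradS_eq_zero_of_const (g : EuclideanSpace ℝ (Fin n) → ℝ) {x : EuclideanSpace ℝ (Fin n)}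
    (hx : ‖x‖ = 1) (hdiff : DifferentiableAt ℝ g x) (C : ℝ)
    (hconst : ∀ y : EuclideanSpace ℝ (Fin n), ‖y‖ = 1 → g y = C) :
    gradS g x = 0 := by
  by_contra hv
  set v : EuclideanSpace ℝ (Fin n) := gradS g x with hvdef
  have hxx : ⟪x, x⟫ = 1 := by rw [real_inner_self_eq_norm_sq, hx]; norm_num
  have hxv : ⟪x, v⟫ = 0 := by
    rw [hvdef, gradS, inner_sub_right, real_inner_smul_right, hxx, mul_one,
      real_inner_comm (gradient g x) x, sub_self]
  set b : EuclideanSpace ℝ (Fin n) := ‖v‖⁻¹ • v with hbdef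
  have hb : ‖b‖ = 1 := by
    rw [hbdef, norm_smul, norm_inv, norm_norm, inv_mul_cancel₀ (norm_ne_zero_iff.mpr hv)]
  have hxb : ⟪x, b⟫ = 0 := by rw [hbdef, real_inner_smul_right, hxv, mul_zero]
  have hds := curve_hasDerivAt g x b 0
    (by simp only [Real.cos_zero, Real.sin_zero, one_smul, zero_smul, add_zero]; exact hdiff)
  have hφ : (fun s => g (Real.cos s • x + Real.sin s • b)) = fun _ => C :=
    funext fun s => hconst _ (curve_norm hx hb hxb s)
  have hinner : ⟪gradient g (Real.cos 0 • x + Real.sin 0 • b),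
      (-Real.sin 0) • x + Real.cos 0 • b⟫ = 0 := by
    have h1 := hds.deriv
    rw [hφ] at h1
    rw [← h1]
    simp
  simp only [Real.cos_zero, Real.sin_zero, one_smul, zero_smul, add_zero, neg_zero,
    zero_add] at hinner
  -- hinner : ⟪gradient g x, b⟫ = 0
  have hexp : gradient g x = v + ⟪gradient g x, x⟫ • x := by rw [hvdef, gradS]; abel
  have hgv : ⟪gradient g x, v⟫ = ‖v‖ ^ 2 := by
    rw [hexp, inner_add_left, real_inner_smul_left, hxv, mul_zero, add_zero,
      real_inner_self_eq_norm_sq]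
  rw [hbdef, real_inner_smul_right, hgv] at hinner
  have hvn : ‖v‖ ≠ 0 := norm_ne_zero_iff.mpr hv
  rcases mul_eq_zero.mp hinner with h | h
  · exact hvn (by simpa using inv_eq_zero.mp h)
  · exact hvn (by nlinarith [norm_nonneg v])


/-- the induced map on the sphere from a linear isometry equivalence -/
def sphMap (T : EuclideanSpace ℝ (Fin n) ≃ₗᵢ[ℝ] EuclideanSpace ℝ (Fin n))
    (ω : Metric.sphere (0 : EuclideanSpace ℝ (Fin n)) 1) :
    Metric.sphere (0 : EuclideanSpace ℝ (Fin n)) 1 :=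
  ⟨T ω, by
    rw [mem_sphere_zero_iff_norm, T.norm_map]
    exact mem_sphere_zero_iff_norm.mp ω.2⟩

lemma sphMap_continuous (T : EuclideanSpace ℝ (Fin n) ≃ₗᵢ[ℝ] EuclideanSpace ℝ (Fin n)) :
    Continuous (sphMap T) :=
  Continuous.subtype_mk (T.continuous.comp continuous_subtype_val) _

lemma uniform_isOpenPos (μ : Measure (Metric.sphere (0 : EuclideanSpace ℝ (Fin n)) 1))
    (hμ : IsUniformProb μ) : μ.IsOpenPosMeasure := by
  haveI := hμ.1
  constructor
  intro U hU hne hU0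
  obtain ⟨x, hxU⟩ := hne
  -- for each y, a rotation sending y to x
  have key : ∀ y : Metric.sphere (0 : EuclideanSpace ℝ (Fin n)) 1, ∃ T : EuclideanSpace ℝ (Fin n) ≃ₗᵢ[ℝ] EuclideanSpace ℝ (Fin n),
      sphMap T y = x := by
    intro y
    have hnx : ‖(x : EuclideanSpace ℝ (Fin n))‖ = 1 := mem_sphere_zero_iff_norm.mp x.2
    have hny : ‖(y : EuclideanSpace ℝ (Fin n))‖ = 1 := mem_sphere_zero_iff_norm.mp y.2
    refine ⟨Submodule.reflection (ℝ ∙ ((y : EuclideanSpace ℝ (Fin n)) - x))ᗮ, ?_⟩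
    apply Subtype.ext
    exact Submodule.reflection_sub (by rw [hnx, hny])
  choose T hT using key
  set W : Metric.sphere (0 : EuclideanSpace ℝ (Fin n)) 1 → Set (Metric.sphere (0 : EuclideanSpace ℝ (Fin n)) 1) := fun y => (sphMap (T y)) ⁻¹' U with hW
  have hWopen : ∀ y, IsOpen (W y) := fun y => hU.preimage (sphMap_continuous (T y))
  have hWmem : ∀ y, y ∈ W y := fun y => by
    simp only [hW, Set.mem_preimage, hT y]; exact hxU
  have hWzero : ∀ y, μ (W y) = 0 := by
    intro y
    have hmap := hμ.2 (T y)
    have hmap2 : Measure.map (sphMap (T y)) μ = μ := hmap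
    rw [hW]
    have := Measure.map_apply (sphMap_continuous (T y)).measurable hU.measurableSet (μ := μ)
    rw [← this]  -- (map ..) U
    rw [hmap2]
    exact hU0
  have hcover : (Set.univ : Set (Metric.sphere (0 : EuclideanSpace ℝ (Fin n)) 1)) ⊆ ⋃ y, W y :=
    fun y _ => Set.mem_iUnion.mpr ⟨y, hWmem y⟩
  obtain ⟨s, hs⟩ := isCompact_univ.elim_finite_subcover W hWopen hcover
  have hle : μ Set.univ ≤ ∑ y ∈ s, μ (W y) :=
    le_trans (measure_mono hs) (measure_biUnion_finset_le s W)
  rw [measure_univ] at hle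
  simp only [hWzero, Finset.sum_const_zero] at hle
  exact one_ne_zero (le_antisymm hle (zero_le))

end Stmt15Aux

/-- A smooth positive probability density `f` on the unit sphere has zero entropy
dissipation `D(f) = 0` if and only if `σ ln f − J[f]·ω` is constant, i.e. `f` is a
Fisher–Von Mises distribution `M_{κΩ}` with `κΩ = σ⁻¹ J[f]` (including the uniform
distribution `κ = 0`), and the compatibility condition `c(κ) = σκ` holds. -/
theorem stmt15 (n : ℕ) (hn : 2 ≤ n) (σ : ℝ) (hσ : 0 < σ)
    (μ : Measure (Metric.sphere (0 : EuclideanSpace ℝ (Fin n)) 1)) (hμ : IsUniformProb μ)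
    (f : EuclideanSpace ℝ (Fin n) → ℝ) (hreg : ContDiff ℝ (⊤ : ℕ∞) f)
    (hpos : ∀ ω ∈ Metric.sphere (0 : EuclideanSpace ℝ (Fin n)) 1, 0 < f ω)
    (hprob : ∫ ω : Metric.sphere (0 : EuclideanSpace ℝ (Fin n)) 1, f ω ∂μ = 1)
    (D : ℝ)
    (hD : D = ∫ ω : Metric.sphere (0 : EuclideanSpace ℝ (Fin n)) 1,
      f ω * ‖gradS (fun y => σ * Real.log (f y) - ⟪y, Jflux μ f⟫)
        (ω : EuclideanSpace ℝ (Fin n))‖ ^ 2 ∂μ) :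
    (D = 0 ↔ ∃ C : ℝ, ∀ ω ∈ Metric.sphere (0 : EuclideanSpace ℝ (Fin n)) 1,
        σ * Real.log (f ω) - ⟪Jflux μ f, ω⟫ = C) ∧
    (D = 0 ↔ ∃ κ : ℝ, ∃ Ω : EuclideanSpace ℝ (Fin n), 0 ≤ κ ∧ ‖Ω‖ = 1 ∧
        (∀ ω ∈ Metric.sphere (0 : EuclideanSpace ℝ (Fin n)) 1,
          f ω = Real.exp (κ * ⟪ω, Ω⟫) /
            (∫ υ : Metric.sphere (0 : EuclideanSpace ℝ (Fin n)) 1,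
              Real.exp (κ * ⟪(υ : EuclideanSpace ℝ (Fin n)), Ω⟫) ∂μ)) ∧
        κ • Ω = σ⁻¹ • Jflux μ f ∧
        (∫ ω : Metric.sphere (0 : EuclideanSpace ℝ (Fin n)) 1,
            ⟪(ω : EuclideanSpace ℝ (Fin n)), Ω⟫ *
              (Real.exp (κ * ⟪(ω : EuclideanSpace ℝ (Fin n)), Ω⟫) /
                (∫ υ : Metric.sphere (0 : EuclideanSpace ℝ (Fin n)) 1,
                  Real.exp (κ * ⟪(υ : EuclideanSpace ℝ (Fin n)), Ω⟫) ∂μ)) ∂μ)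
          = σ * κ) := by
    classical
  haveI hprobμ := hμ.1
  haveI := Stmt15Aux.uniform_isOpenPos μ hμ
  set J : EuclideanSpace ℝ (Fin n) := Jflux μ f with hJdef
  set g : EuclideanSpace ℝ (Fin n) → ℝ := fun y => σ * Real.log (f y) - ⟪y, J⟫ with hgdef
  have hσ' : σ ≠ 0 := ne_of_gt hσ
  have hfdiff : Differentiable ℝ f := hreg.differentiable (by simp)
  have hinner_eq : (fun y : EuclideanSpace ℝ (Fin n) => ⟪y, J⟫) = fun y => (innerSL ℝ J) y := by
    funext y
    rw [innerSL_apply_apply]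
    exact real_inner_comm J y
  -- differentiability of g where f ≠ 0
  have hgdiff : ∀ x : EuclideanSpace ℝ (Fin n), f x ≠ 0 → DifferentiableAt ℝ g x := by
    intro x hfx
    have h1 : DifferentiableAt ℝ (fun y => Real.log (f y)) x :=
      (Real.differentiableAt_log hfx).comp x (hfdiff x)
    have h2 : DifferentiableAt ℝ (fun y : EuclideanSpace ℝ (Fin n) => ⟪y, J⟫) x := by
      rw [hinner_eq]; exact (innerSL ℝ J).differentiableAt
    exact (h1.const_mul σ).sub h2
  have hsph : ∀ ω : Metric.sphere (0 : EuclideanSpace ℝ (Fin n)) 1,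
      ‖(ω : EuclideanSpace ℝ (Fin n))‖ = 1 := fun ω => mem_sphere_zero_iff_norm.mp ω.2
  have hfposS : ∀ ω : Metric.sphere (0 : EuclideanSpace ℝ (Fin n)) 1,
      0 < f ω := fun ω => hpos ω ω.2
  -- gradient formula
  set G : EuclideanSpace ℝ (Fin n) → EuclideanSpace ℝ (Fin n) :=
    fun x => σ • ((f x)⁻¹ • gradient f x) - J with hGdef
  have htdJ : (InnerProductSpace.toDual ℝ (EuclideanSpace ℝ (Fin n))).symm (innerSL ℝ J) = J := by
    suffices h : innerSL ℝ J = InnerProductSpace.toDual ℝ (EuclideanSpace ℝ (Fin n)) J by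
      rw [h, LinearIsometryEquiv.symm_apply_apply]
    ext y
    rw [InnerProductSpace.toDual_apply_apply, innerSL_apply_apply]
  have hgrad_eq : ∀ x : EuclideanSpace ℝ (Fin n), f x ≠ 0 → gradient g x = G x := by
    intro x hfx
    have hf' : HasFDerivAt f (fderiv ℝ f x) x := (hfdiff x).hasFDerivAt
    have hlog : HasFDerivAt (fun y => Real.log (f y)) ((f x)⁻¹ • fderiv ℝ f x) x := by
      have := (Real.hasDerivAt_log hfx).comp_hasFDerivAt x hf'
      exact this
    have hinner : HasFDerivAt (fun y : EuclideanSpace ℝ (Fin n) => ⟪y, J⟫) (innerSL ℝ J) x := by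
      rw [hinner_eq]; exact (innerSL ℝ J).hasFDerivAt
    have hmul : HasFDerivAt (fun y => σ * Real.log (f y))
        (σ • ((f x)⁻¹ • fderiv ℝ f x)) x := hlog.const_mul σ |>.congr_fderiv ?_
    · have hg' : HasFDerivAt g (σ • ((f x)⁻¹ • fderiv ℝ f x) - innerSL ℝ J) x :=
        hmul.sub hinner
      have : fderiv ℝ g x = σ • ((f x)⁻¹ • fderiv ℝ f x) - innerSL ℝ J := hg'.fderiv
      show (InnerProductSpace.toDual ℝ (EuclideanSpace ℝ (Fin n))).symm (fderiv ℝ g x) = G x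
      rw [this, map_sub, _root_.map_smul, _root_.map_smul, htdJ, hGdef]
      rfl
    · rw [smul_comm]
  -- continuity of G on the set where f ≠ 0
  have hgradf_cont : Continuous (fun x => gradient f x) := by
    have h1 : Continuous (fun x => fderiv ℝ f x) := hreg.continuous_fderiv (by simp)
    exact (InnerProductSpace.toDual ℝ (EuclideanSpace ℝ (Fin n))).symm.continuous.comp h1
  have hGcont : ContinuousOn G {x | f x ≠ 0} := by
    have h1 : ContinuousOn (fun x => (f x)⁻¹) {x | f x ≠ 0} :=
      (hreg.continuous.continuousOn).inv₀ fun x hx => hx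
    exact (((h1.smul hgradf_cont.continuousOn).const_smul σ).sub continuousOn_const)
  -- the integrand as a continuous function on the sphere
  have hmemne : ∀ ω : Metric.sphere (0 : EuclideanSpace ℝ (Fin n)) 1,
      (ω : EuclideanSpace ℝ (Fin n)) ∈ {x | f x ≠ 0} := fun ω => ne_of_gt (hfposS ω)
  have hScont : Continuous (fun ω : Metric.sphere (0 : EuclideanSpace ℝ (Fin n)) 1 =>
      f ω * ‖gradS g (ω : EuclideanSpace ℝ (Fin n))‖ ^ 2) := by
    have heq : (fun ω : Metric.sphere (0 : EuclideanSpace ℝ (Fin n)) 1 =>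
        f ω * ‖gradS g (ω : EuclideanSpace ℝ (Fin n))‖ ^ 2)
        = (fun ω : Metric.sphere (0 : EuclideanSpace ℝ (Fin n)) 1 =>
        f ω * ‖G ω - ⟪G ω, (ω : EuclideanSpace ℝ (Fin n))⟫ • (ω : EuclideanSpace ℝ (Fin n))‖ ^ 2) := by
      funext ω
      rw [gradS, hgrad_eq _ (hmemne ω)]
    rw [heq]
    have hcoe : Continuous (fun ω : Metric.sphere (0 : EuclideanSpace ℝ (Fin n)) 1 =>
        (ω : EuclideanSpace ℝ (Fin n))) := continuous_subtype_val
    have hGS : Continuous (fun ω : Metric.sphere (0 : EuclideanSpace ℝ (Fin n)) 1 =>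
        G (ω : EuclideanSpace ℝ (Fin n))) :=
      hGcont.comp_continuous hcoe hmemne
    exact ((hreg.continuous.comp hcoe).mul
      (((hGS.sub ((hGS.inner (𝕜 := ℝ) hcoe).smul hcoe)).norm).pow 2))
  have hSnonneg : ∀ ω : Metric.sphere (0 : EuclideanSpace ℝ (Fin n)) 1,
      0 ≤ f ω * ‖gradS g (ω : EuclideanSpace ℝ (Fin n))‖ ^ 2 :=
    fun ω => mul_nonneg (hfposS ω).le (by positivity)
  have hSint : Integrable (fun ω : Metric.sphere (0 : EuclideanSpace ℝ (Fin n)) 1 =>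
      f ω * ‖gradS g (ω : EuclideanSpace ℝ (Fin n))‖ ^ 2) μ :=
    hScont.integrable_of_hasCompactSupport (HasCompactSupport.of_compactSpace _)
  -- Part 1
  have hIff1 : D = 0 ↔ ∃ C : ℝ, ∀ ω ∈ Metric.sphere (0 : EuclideanSpace ℝ (Fin n)) 1,
      σ * Real.log (f ω) - ⟪J, ω⟫ = C := by
    constructor
    · intro hD0
      rw [hD] at hD0
      have hae := (integral_eq_zero_iff_of_nonneg (fun ω => hSnonneg ω) hSint).mp hD0
      have hzero : (fun ω : Metric.sphere (0 : EuclideanSpace ℝ (Fin n)) 1 =>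
          f ω * ‖gradS g (ω : EuclideanSpace ℝ (Fin n))‖ ^ 2) = 0 :=
        (Continuous.ae_eq_iff_eq μ hScont continuous_const).mp hae
      have hgradzero : ∀ x : EuclideanSpace ℝ (Fin n), ‖x‖ = 1 → gradS g x = 0 := by
        intro x hx
        have hmem : x ∈ Metric.sphere (0 : EuclideanSpace ℝ (Fin n)) 1 :=
          mem_sphere_zero_iff_norm.mpr hx
        have := congrFun hzero ⟨x, hmem⟩
        simp only [Pi.zero_apply] at this
        have hfx : 0 < f x := hpos x hmem
        have h2 : ‖gradS g x‖ ^ 2 = 0 := by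
          rcases mul_eq_zero.mp this with h | h
          · exact absurd h (ne_of_gt hfx)
          · exact h
        have h3 : ‖gradS g x‖ = 0 := (pow_eq_zero_iff two_ne_zero).mp h2
        exact norm_eq_zero.mp h3
      have hdiffS : ∀ x : EuclideanSpace ℝ (Fin n), ‖x‖ = 1 → DifferentiableAt ℝ g x :=
        fun x hx => hgdiff x (ne_of_gt (hpos x (mem_sphere_zero_iff_norm.mpr hx)))
      obtain ⟨i0, _⟩ : ∃ i : Fin n, True := ⟨⟨0, by omega⟩, trivial⟩
      set x₀ : EuclideanSpace ℝ (Fin n) := EuclideanSpace.single i0 1 with hx₀def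
      have hx₀ : ‖x₀‖ = 1 := by rw [hx₀def, EuclideanSpace.norm_single, norm_one]
      refine ⟨g x₀, fun ω hω => ?_⟩
      have hωn : ‖ω‖ = 1 := mem_sphere_zero_iff_norm.mp hω
      have := Stmt15Aux.eq_on_sphere hn g hdiffS hgradzero hωn hx₀
      rw [hgdef] at this
      rw [real_inner_comm]
      exact this
    · intro ⟨C, hC⟩
      have hgconst : ∀ y : EuclideanSpace ℝ (Fin n), ‖y‖ = 1 → g y = C := by
        intro y hy
        have := hC y (mem_sphere_zero_iff_norm.mpr hy)
        rw [hgdef]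
        rw [real_inner_comm] at this
        exact this
      have hgradzero : ∀ ω : Metric.sphere (0 : EuclideanSpace ℝ (Fin n)) 1,
          gradS g (ω : EuclideanSpace ℝ (Fin n)) = 0 := fun ω =>
        Stmt15Aux.gradS_eq_zero_of_const g (hsph ω)
          (hgdiff _ (ne_of_gt (hfposS ω))) C hgconst
      rw [hD]
      have : ∀ ω : Metric.sphere (0 : EuclideanSpace ℝ (Fin n)) 1,
          f ω * ‖gradS g (ω : EuclideanSpace ℝ (Fin n))‖ ^ 2 = 0 := by
        intro ω
        rw [hgradzero ω, norm_zero]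
        ring
      calc ∫ ω : Metric.sphere (0 : EuclideanSpace ℝ (Fin n)) 1,
          f ω * ‖gradS g (ω : EuclideanSpace ℝ (Fin n))‖ ^ 2 ∂μ
          = ∫ _ : Metric.sphere (0 : EuclideanSpace ℝ (Fin n)) 1, (0 : ℝ) ∂μ :=
            integral_congr_ae (Filter.Eventually.of_forall this)
        _ = 0 := integral_zero _ _
  -- Part 2
  have hIntfω : Integrable (fun ω : Metric.sphere (0 : EuclideanSpace ℝ (Fin n)) 1 =>
      f ω • (ω : EuclideanSpace ℝ (Fin n))) μ :=
    ((hreg.continuous.comp continuous_subtype_val).smul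
      continuous_subtype_val).integrable_of_hasCompactSupport (HasCompactSupport.of_compactSpace _)
  have hJinner : ∀ c : EuclideanSpace ℝ (Fin n),
      (∫ ω : Metric.sphere (0 : EuclideanSpace ℝ (Fin n)) 1,
        f ω * ⟪c, (ω : EuclideanSpace ℝ (Fin n))⟫ ∂μ) = ⟪c, J⟫ := by
    intro c
    have h1 := integral_inner (𝕜 := ℝ) hIntfω c
    have h2 : J = ∫ ω : Metric.sphere (0 : EuclideanSpace ℝ (Fin n)) 1,
        f ω • (ω : EuclideanSpace ℝ (Fin n)) ∂μ := rfl
    rw [h2, ← h1]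
    apply MeasureTheory.integral_congr_ae
    apply Filter.Eventually.of_forall
    intro ω
    simp only [real_inner_smul_right]
  refine ⟨hIff1, hIff1.trans ?_⟩
  obtain ⟨i0, -⟩ : ∃ _ : Fin n, True := ⟨⟨0, by omega⟩, trivial⟩
  constructor
  · rintro ⟨C, hC⟩
    set κ : ℝ := σ⁻¹ * ‖J‖ with hκdef
    have hκ0 : 0 ≤ κ := mul_nonneg (inv_nonneg.mpr hσ.le) (norm_nonneg J)
    set Ω : EuclideanSpace ℝ (Fin n) :=
      if J = 0 then EuclideanSpace.single i0 1 else ‖J‖⁻¹ • J with hΩdef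
    have hΩn : ‖Ω‖ = 1 := by
      by_cases hJ0 : J = 0
      · rw [hΩdef, if_pos hJ0, EuclideanSpace.norm_single, norm_one]
      · rw [hΩdef, if_neg hJ0, norm_smul, norm_inv, norm_norm,
          inv_mul_cancel₀ (norm_ne_zero_iff.mpr hJ0)]
    have hκΩ : κ • Ω = σ⁻¹ • J := by
      by_cases hJ0 : J = 0
      · rw [hκdef, hJ0]
        simp
      · rw [hΩdef, if_neg hJ0, hκdef, smul_smul, mul_assoc,
          mul_inv_cancel₀ (norm_ne_zero_iff.mpr hJ0), mul_one]
    have hκin : ∀ ω : EuclideanSpace ℝ (Fin n), κ * ⟪ω, Ω⟫ = σ⁻¹ * ⟪ω, J⟫ := by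
      intro ω
      rw [← real_inner_smul_right, hκΩ, real_inner_smul_right]
    have hexp : ∀ ω ∈ Metric.sphere (0 : EuclideanSpace ℝ (Fin n)) 1,
        Real.exp (κ * ⟪ω, Ω⟫) = f ω * Real.exp (-(C / σ)) := by
      intro ω hω
      have h1 := hC ω hω
      have h2 : κ * ⟪ω, Ω⟫ = Real.log (f ω) - C / σ := by
        have h3 : ⟪ω, J⟫ = σ * Real.log (f ω) - C := by
          rw [real_inner_comm J ω]
          linarith [h1]
        rw [hκin ω, h3]
        field_simp
      rw [h2, Real.exp_sub, Real.exp_log (hpos ω hω), Real.exp_neg, div_eq_mul_inv]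
    have hZ : (∫ υ : Metric.sphere (0 : EuclideanSpace ℝ (Fin n)) 1,
        Real.exp (κ * ⟪(υ : EuclideanSpace ℝ (Fin n)), Ω⟫) ∂μ) = Real.exp (-(C / σ)) := by
      have h1 : ∀ υ : Metric.sphere (0 : EuclideanSpace ℝ (Fin n)) 1,
          Real.exp (κ * ⟪(υ : EuclideanSpace ℝ (Fin n)), Ω⟫) = f υ * Real.exp (-(C / σ)) :=
        fun υ => hexp υ υ.2
      rw [integral_congr_ae (Filter.Eventually.of_forall h1), MeasureTheory.integral_mul_const, hprob, one_mul]
    have hform : ∀ ω ∈ Metric.sphere (0 : EuclideanSpace ℝ (Fin n)) 1,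
        f ω = Real.exp (κ * ⟪ω, Ω⟫) /
          (∫ υ : Metric.sphere (0 : EuclideanSpace ℝ (Fin n)) 1,
            Real.exp (κ * ⟪(υ : EuclideanSpace ℝ (Fin n)), Ω⟫) ∂μ) := by
      intro ω hω
      rw [hZ, hexp ω hω, mul_div_assoc, div_self (Real.exp_ne_zero _), mul_one]
    refine ⟨κ, Ω, hκ0, hΩn, hform, hκΩ, ?_⟩
    have h1 : ∀ ω : Metric.sphere (0 : EuclideanSpace ℝ (Fin n)) 1,
        ⟪(ω : EuclideanSpace ℝ (Fin n)), Ω⟫ *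
          (Real.exp (κ * ⟪(ω : EuclideanSpace ℝ (Fin n)), Ω⟫) /
            (∫ υ : Metric.sphere (0 : EuclideanSpace ℝ (Fin n)) 1,
              Real.exp (κ * ⟪(υ : EuclideanSpace ℝ (Fin n)), Ω⟫) ∂μ))
        = f ω * ⟪Ω, (ω : EuclideanSpace ℝ (Fin n))⟫ := by
      intro ω
      rw [← hform ω ω.2, real_inner_comm Ω (ω : EuclideanSpace ℝ (Fin n))]
      ring
    rw [integral_congr_ae (Filter.Eventually.of_forall h1), hJinner Ω]
    have hJκ : J = σ • (κ • Ω) := by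
      rw [hκΩ, smul_smul, mul_inv_cancel₀ hσ', one_smul]
    rw [hJκ, real_inner_smul_right, real_inner_smul_right, real_inner_self_eq_norm_sq, hΩn]
    ring
  · rintro ⟨κ, Ω, hκ0, hΩn, hform, hκΩ, -⟩
    have hZpos : 0 < ∫ υ : Metric.sphere (0 : EuclideanSpace ℝ (Fin n)) 1,
        Real.exp (κ * ⟪(υ : EuclideanSpace ℝ (Fin n)), Ω⟫) ∂μ := by
      set x₀ : EuclideanSpace ℝ (Fin n) := EuclideanSpace.single i0 1 with hx₀def
      have hx₀ : x₀ ∈ Metric.sphere (0 : EuclideanSpace ℝ (Fin n)) 1 := by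
        rw [mem_sphere_zero_iff_norm, hx₀def, EuclideanSpace.norm_single, norm_one]
      have h2 : 0 < f x₀ := hpos _ hx₀
      rw [hform x₀ hx₀] at h2
      rcases div_pos_iff.mp h2 with ⟨-, h⟩ | ⟨h, -⟩
      · exact h
      · exact absurd h (not_lt.mpr (Real.exp_pos _).le)
    refine ⟨-(σ * Real.log (∫ υ : Metric.sphere (0 : EuclideanSpace ℝ (Fin n)) 1,
      Real.exp (κ * ⟪(υ : EuclideanSpace ℝ (Fin n)), Ω⟫) ∂μ)), fun ω hω => ?_⟩
    have hlogf : Real.log (f ω) = κ * ⟪ω, Ω⟫ -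
        Real.log (∫ υ : Metric.sphere (0 : EuclideanSpace ℝ (Fin n)) 1,
          Real.exp (κ * ⟪(υ : EuclideanSpace ℝ (Fin n)), Ω⟫) ∂μ) := by
      rw [hform ω hω, Real.log_div (Real.exp_ne_zero _) (ne_of_gt hZpos), Real.log_exp]
    have hJω : ⟪J, ω⟫ = σ * (κ * ⟪ω, Ω⟫) := by
      have hJeq : J = σ • (κ • Ω) := by
        rw [hκΩ, smul_smul, mul_inv_cancel₀ hσ', one_smul]
      rw [hJeq, real_inner_smul_left, real_inner_smul_left, real_inner_comm ω Ω]
    rw [hlogf, hJω]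
    ring
end
end
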